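/- arXiv:2305.19605 — 4 statements merged into one kernel-verified Lean document; each statement's English description precedes it below -/
import Mathlib

section
/- For every integer T ≥ 1, the iterates of Free AdaGrad run with any positive non-decreasing sequence (h_t)_{t≥1} satisfy Σ_{t=1}^T (f(x_t) − f(x*)) ≤ h_{T+1} · ( 2‖x₁ − x*‖ · √(k_T) · ( 2 + √( (1/3) · Σ_{t=1}^T ‖g_t‖²/h_t² ) ) + γ_{k_T} · Σ_{t=1}^T ‖g_t‖²/h_t² ). -/
/-!
Each projected step gives the online-gradient-descent inequality
`⟪g_t, x_t - x*⟫ ≤ h_t ((‖x_t - x*‖² - ‖x_{t+1} - x*‖²) / (2γ_{k_t}) + γ_{k_t} ‖g_t‖² / (2 h_t²))`,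
and as the left side dominates the nonnegative gap `f x_t - f x*` and `h` is non-decreasing,
`h_t` may be replaced by `h_{T+1}`. The weights `1 / (2γ_{k_t})` change only when `k` jumps, so
Abel summation bounds the telescoping part by a sum over the at most `k_T` jump times `t` of
`‖x₁ - x*‖ ‖x_t - x₁‖ / γ_{k_{t-1}}`, and the selection rule bounds `‖x_t - x₁‖` by
`B_t(k_{t-1})`. The first part of `B` contributes `∑_{j ≤ k_T} 1/√j ≤ 2√k_T`; for the second,
`γ` at least doubles between jump times, so each `‖g_s‖² / h_s²` enters the squares with total
weight at most a geometric series `∑ 4^{-l-1} = 1/3`, and Cauchy–Schwarz finishes.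
-/

open scoped RealInnerProductSpace

open Finset

lemma sum_Icc_one_div_sqrt_le (n : ℕ) : ∑ j ∈ Icc 1 n, 1 / √(j : ℝ) ≤ 2 * √n := by
  induction n with
  | zero => simp
  | succ m ih =>
    rw [sum_Icc_succ_top (by omega)]
    have hpos : 0 < √((m : ℝ) + 1) := Real.sqrt_pos.2 (by positivity)
    have hstep : 1 / √((m : ℝ) + 1) ≤ 2 * √((m : ℝ) + 1) - 2 * √m := by
      rw [div_le_iff₀ hpos]
      nlinarith [Real.sq_sqrt (by positivity : (0 : ℝ) ≤ m),
        Real.sq_sqrt (by positivity : (0 : ℝ) ≤ m + 1), Real.sqrt_nonneg m,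
        Real.sqrt_le_sqrt (by linarith : (m : ℝ) ≤ m + 1)]
    push_cast
    linarith

lemma sum_pow_le_of_injOn {ι : Type*} {s : Finset ι} {n : ι → ℕ} (hn : Set.InjOn n s) {r : ℝ}
    (hr₀ : 0 ≤ r) (hr₁ : r < 1) : ∑ i ∈ s, r ^ n i ≤ (1 - r)⁻¹ := by
  classical
  rw [← sum_image hn, ← tsum_geometric_of_lt_one hr₀ hr₁]
  exact (summable_geometric_of_lt_one hr₀ hr₁).sum_le_tsum _ fun i _ => pow_nonneg hr₀ i

lemma sq_norm_sub_sub_sq_norm_sub_le {E : Type*} [SeminormedAddCommGroup E] (a b c : E) :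
    ‖a - c‖ ^ 2 - ‖b - c‖ ^ 2 ≤ 2 * ‖a - c‖ * ‖a - b‖ := by
  have htri := norm_sub_le_norm_sub_add_norm_sub a b c
  rcases le_total ‖a - c‖ ‖b - c‖ with hle | hle
  · nlinarith [norm_nonneg (a - c), norm_nonneg (a - b)]
  · nlinarith [norm_nonneg (b - c)]

section InnerProductSpace

variable {E : Type*} [NormedAddCommGroup E] [InnerProductSpace ℝ E]

lemma norm_proj_sub_le {Θ : Set E} (hΘ : Convex ℝ Θ) {proj : E → E}
    (hprojΘ : ∀ z, proj z ∈ Θ) (hproj : ∀ z, ∀ y ∈ Θ, ‖z - proj z‖ ≤ ‖z - y‖) (z : E) {y : E}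
    (hy : y ∈ Θ) : ‖proj z - y‖ ≤ ‖z - y‖ := by
  have : Nonempty Θ := ⟨⟨y, hy⟩⟩
  have hinner : ⟪z - proj z, y - proj z⟫ ≤ 0 := by
    refine (norm_eq_iInf_iff_real_inner_le_zero hΘ (hprojΘ z)).1 ?_ y hy
    exact le_antisymm (le_ciInf fun w => hproj z w w.2)
      (ciInf_le ⟨0, Set.forall_mem_range.2 fun _ => norm_nonneg _⟩ (⟨proj z, hprojΘ z⟩ : Θ))
  have hexp : ‖z - y‖ ^ 2 = ‖z - proj z‖ ^ 2 - 2 * ⟪z - proj z, y - proj z⟫ + ‖proj z - y‖ ^ 2 := by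
    rw [show z - y = (z - proj z) - (y - proj z) by abel, norm_sub_sq_real, norm_sub_rev y]
  exact pow_le_pow_iff_left₀ (norm_nonneg _) (norm_nonneg _) two_ne_zero |>.1 <| by
    nlinarith [sq_nonneg ‖z - proj z‖]

lemma inner_le_of_norm_sub_le {x x' g y : E} {c : ℝ} (hc : 0 < c)
    (hx' : ‖x' - y‖ ≤ ‖x - c • g - y‖) :
    ⟪g, x - y⟫ ≤ (2 * c)⁻¹ * (‖x - y‖ ^ 2 - ‖x' - y‖ ^ 2) + c / 2 * ‖g‖ ^ 2 := by
  have hexp : ‖x - c • g - y‖ ^ 2 = ‖x - y‖ ^ 2 - 2 * c * ⟪g, x - y⟫ + c ^ 2 * ‖g‖ ^ 2 := by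
    rw [show x - c • g - y = (x - y) - c • g by abel, norm_sub_sq_real, real_inner_smul_right,
      norm_smul, Real.norm_of_nonneg hc.le, real_inner_comm]
    ring
  have hsq := pow_le_pow_left₀ (norm_nonneg _) hx' 2
  rw [← sub_nonneg]
  have hgap : (2 * c)⁻¹ * (‖x - y‖ ^ 2 - ‖x' - y‖ ^ 2) + c / 2 * ‖g‖ ^ 2 - ⟪g, x - y⟫
      = (2 * c)⁻¹ * (‖x - c • g - y‖ ^ 2 - ‖x' - y‖ ^ 2) := by
    rw [hexp]; field_simp; ring
  rw [hgap]
  exact mul_nonneg (by positivity) (by linarith)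

lemma sub_le_mul_of_projected_step {f : E → ℝ} {x x' g y : E} {γ η H : ℝ} (hγ : 0 < γ)
    (hη : 0 < η) (hηH : η ≤ H) (hg : ∀ z, f x + ⟪g, z - x⟫ ≤ f z) (hy : f y ≤ f x)
    (hx' : ‖x' - y‖ ≤ ‖x - (γ / η) • g - y‖) :
    f x - f y ≤ H * ((2 * γ)⁻¹ * (‖x - y‖ ^ 2 - ‖x' - y‖ ^ 2) + γ / 2 * (‖g‖ ^ 2 / η ^ 2)) := by
  have hsub : f x - f y ≤ ⟪g, x - y⟫ := by
    have := hg y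
    rw [← neg_sub x y, inner_neg_right] at this
    linarith
  have hOGD := inner_le_of_norm_sub_le (div_pos hγ hη) hx'
  set Y := (2 * γ)⁻¹ * (‖x - y‖ ^ 2 - ‖x' - y‖ ^ 2) + γ / 2 * (‖g‖ ^ 2 / η ^ 2)
  have hY : (2 * (γ / η))⁻¹ * (‖x - y‖ ^ 2 - ‖x' - y‖ ^ 2) + γ / η / 2 * ‖g‖ ^ 2 = η * Y := by
    simp only [Y]
    field_simp
  rw [hY] at hOGD
  have hYnn : 0 ≤ Y := nonneg_of_mul_nonneg_right (by linarith) hη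
  calc f x - f y ≤ η * Y := hsub.trans hOGD
    _ ≤ H * Y := mul_le_mul_of_nonneg_right hηH hYnn

lemma sum_sub_le_of_projected_steps {f : E → ℝ} {x g : ℕ → E} {y : E} {c η : ℕ → ℝ}
    (hc : ∀ t, 0 < c t) (hη : ∀ t, 1 ≤ t → 0 < η t) (hηmono : ∀ s t, 1 ≤ s → s ≤ t → η s ≤ η t)
    (hg : ∀ t, 1 ≤ t → ∀ z, f (x t) + ⟪g t, z - x t⟫ ≤ f z) (hy : ∀ t, 1 ≤ t → f y ≤ f (x t))
    (hx : ∀ t, 1 ≤ t → ‖x (t + 1) - y‖ ≤ ‖x t - (c t / η t) • g t - y‖) (T : ℕ) :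
    ∑ t ∈ Icc 1 T, (f (x t) - f y)
      ≤ η (T + 1) * (∑ t ∈ Icc 1 T, (2 * c t)⁻¹ * (‖x t - y‖ ^ 2 - ‖x (t + 1) - y‖ ^ 2)
        + ∑ t ∈ Icc 1 T, c t / 2 * (‖g t‖ ^ 2 / η t ^ 2)) := by
  rw [← sum_add_distrib, mul_sum]
  refine sum_le_sum fun t ht => ?_
  have ht := mem_Icc.1 ht
  exact sub_le_mul_of_projected_step (hc t) (hη t ht.1) (hηmono _ _ ht.1 (by omega))
    (hg t ht.1) (hy t ht.1) (hx t ht.1)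

end InnerProductSpace

/-- `t` closes the epoch of steps that use the index `k (t - 1)`; `T + 1` closes the last one. -/
def jumpTimes (k : ℕ → ℕ) (T : ℕ) : Finset ℕ :=
  insert (T + 1) ((Icc 1 T).filter fun t => k (t - 1) < k t)

section jumpTimes

variable {k : ℕ → ℕ} {T t : ℕ}

lemma mem_jumpTimes :
    t ∈ jumpTimes k T ↔ t = T + 1 ∨ (1 ≤ t ∧ t ≤ T) ∧ k (t - 1) < k t := by
  simp [jumpTimes]

lemma le_of_mem_jumpTimes (ht : t ∈ jumpTimes k T) : 1 ≤ t ∧ t ≤ T + 1 := by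
  rw [mem_jumpTimes] at ht
  omega

lemma strictMonoOn_jumpTimes (hk : Monotone k) :
    StrictMonoOn (fun t => k (t - 1)) (jumpTimes k T) := by
  intro s hs t ht hst
  have hsT := (le_of_mem_jumpTimes ht).2
  obtain rfl | ⟨-, hjump⟩ := mem_jumpTimes.1 hs
  · omega
  · exact hjump.trans_le (hk (by omega))

lemma mapsTo_jumpTimes (hk : Monotone k) :
    Set.MapsTo (fun t => k (t - 1)) (jumpTimes k T) (Icc (k 0) (k T)) := fun t ht => by
  have := le_of_mem_jumpTimes ht
  exact mem_Icc.2 ⟨hk (Nat.zero_le _), hk (by omega)⟩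

lemma sum_mul_sub_le_sum_jumpTimes (hk : Monotone k) {β : ℕ → ℝ} (hβ : Antitone β)
    (hβ₀ : ∀ j, 0 ≤ β j) {D e : ℕ → ℝ} (hDe : ∀ t, D 1 - D t ≤ e t) (he : ∀ t, 0 ≤ e t) (T : ℕ) :
    ∑ t ∈ Icc 1 T, β (k t) * (D t - D (t + 1)) ≤ ∑ t ∈ jumpTimes k T, β (k (t - 1)) * e t := by
  -- Abel summation: the partial sum equals `β (k T) * (D 1 - D (T + 1))` plus the terms
  -- `(β (k (t - 1)) - β (k t)) * (D 1 - D t)`, which vanish away from jumps of `k`.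
  have abel : ∀ T, ∑ t ∈ Icc 1 T, β (k t) * (D t - D (t + 1)) ≤
      ∑ t ∈ Icc 1 T, (if k (t - 1) < k t then β (k (t - 1)) * e t else 0)
        + β (k T) * (D 1 - D (T + 1)) := by
    intro T
    induction T with
    | zero => simp
    | succ T ih =>
      rw [sum_Icc_succ_top (by omega), sum_Icc_succ_top (by omega), Nat.add_sub_cancel]
      have hjump : (β (k T) - β (k (T + 1))) * (D 1 - D (T + 1))
          ≤ if k T < k (T + 1) then β (k T) * e (T + 1) else 0 := by
        split_ifs with hlt
        · nlinarith [hβ hlt.le, hDe (T + 1), hβ₀ (k (T + 1)), he (T + 1)]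
        · simp [le_antisymm (hk T.le_succ) (not_lt.1 hlt)]
      linarith
  rw [jumpTimes, sum_insert (by simp), sum_filter, Nat.add_sub_cancel]
  linarith [abel T, mul_le_mul_of_nonneg_left (hDe (T + 1)) (hβ₀ (k T))]

end jumpTimes

section DoublingSteps

variable {γ₀ : ℝ} {γ : ℕ → ℝ} {k : ℕ → ℕ} {w : ℕ → ℝ}

lemma sq_div_sq_two_mul_eq (hγ₀ : 0 < γ₀) (hγ : ∀ j, γ j = γ₀ * 2 ^ j) {i j : ℕ} (hij : i ≤ j) :
    γ i ^ 2 / (2 * γ j) ^ 2 = 1 / 4 * (1 / 4) ^ (j - i) := by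
  obtain ⟨d, rfl⟩ := Nat.exists_eq_add_of_le hij
  simp only [hγ, Nat.add_sub_cancel_left, pow_add]
  have h4 : ((2 : ℝ) ^ d) ^ 2 * (1 / 4) ^ d = 1 := by
    rw [← pow_mul, mul_comm d 2, pow_mul, ← mul_pow]
    norm_num
  field_simp
  linear_combination (-4) * h4

lemma sum_jumpTimes_sq_le (hγ₀ : 0 < γ₀) (hγ : ∀ j, γ j = γ₀ * 2 ^ j) (hk : Monotone k)
    (hw : ∀ s, 0 ≤ w s) (T : ℕ) :
    ∑ t ∈ jumpTimes k T, (∑ s ∈ Ico 1 t, γ (k s) ^ 2 * w s) / (2 * γ (k (t - 1))) ^ 2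
      ≤ 1 / 3 * ∑ s ∈ Icc 1 T, w s := by
  have hterm : ∀ t ∈ jumpTimes k T,
      (∑ s ∈ Ico 1 t, γ (k s) ^ 2 * w s) / (2 * γ (k (t - 1))) ^ 2
        = ∑ s ∈ Ico 1 t, 1 / 4 * (1 / 4) ^ (k (t - 1) - k s) * w s := by
    intro t _
    rw [sum_div]
    refine sum_congr rfl fun s hs => ?_
    have hst : s ≤ t - 1 := by rw [mem_Ico] at hs; omega
    rw [mul_div_right_comm, sq_div_sq_two_mul_eq hγ₀ hγ (hk hst)]
  rw [sum_congr rfl hterm, sum_comm' (t' := Icc 1 T)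
    (s' := fun s => (jumpTimes k T).filter (s < ·)), mul_sum]
  · refine sum_le_sum fun s _ => ?_
    rw [← sum_mul, ← mul_sum]
    refine mul_le_mul_of_nonneg_right ?_ (hw s)
    -- After a jump of `k` the step size at least doubles, so the weights form a geometric series.
    have hinj : Set.InjOn (fun t => k (t - 1) - k s) ((jumpTimes k T).filter (s < ·)) := by
      intro p hp q hq hpq
      simp only [coe_filter, Set.mem_ofPred_eq] at hp hq
      have hp' := hk (Nat.le_sub_one_of_lt hp.2)
      have hq' := hk (Nat.le_sub_one_of_lt hq.2)
      exact (strictMonoOn_jumpTimes hk).injOn hp.1 hq.1 (by simp only at hpq ⊢; omega)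
    calc 1 / 4 * ∑ t ∈ (jumpTimes k T).filter (s < ·), (1 / 4 : ℝ) ^ (k (t - 1) - k s)
        ≤ 1 / 4 * (1 - 1 / 4)⁻¹ := by
          gcongr
          exact sum_pow_le_of_injOn hinj (by norm_num) (by norm_num)
      _ = 1 / 3 := by norm_num
  · intro t s
    simp only [mem_Ico, mem_Icc, mem_filter]
    constructor
    · rintro ⟨ht, hs⟩
      have := le_of_mem_jumpTimes ht
      exact ⟨⟨ht, hs.2⟩, hs.1, by omega⟩
    · rintro ⟨⟨ht, hst⟩, hs, -⟩
      exact ⟨ht, hs, hst⟩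

lemma sum_jumpTimes_le (hγ₀ : 0 < γ₀) (hγ : ∀ j, γ j = γ₀ * 2 ^ j) (hk : Monotone k)
    (hk₀ : 1 ≤ k 0) (hw : ∀ s, 0 ≤ w s) (T : ℕ) :
    ∑ t ∈ jumpTimes k T, (2 * γ (k (t - 1)))⁻¹ *
        (2 * γ (k (t - 1)) / √(k (t - 1)) + √(∑ s ∈ Ico 1 t, γ (k s) ^ 2 * w s))
      ≤ √(k T) * (2 + √(1 / 3 * ∑ s ∈ Icc 1 T, w s)) := by
  set Γ : ℕ → ℝ := fun t => ∑ s ∈ Ico 1 t, γ (k s) ^ 2 * w s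
  have hsplit : ∀ t, (2 * γ (k (t - 1)))⁻¹ * (2 * γ (k (t - 1)) / √(k (t - 1)) + √(Γ t))
      = 1 / √(k (t - 1)) + √1 * √(Γ t / (2 * γ (k (t - 1))) ^ 2) := by
    intro t
    have hγpos : 0 < γ (k (t - 1)) := by rw [hγ]; positivity
    rw [Real.sqrt_div' _ (sq_nonneg _), Real.sqrt_sq (by positivity), Real.sqrt_one]
    field_simp
  rw [sum_congr rfl fun t _ => hsplit t, sum_add_distrib]
  have hinj := (strictMonoOn_jumpTimes (T := T) hk).injOn
  have hrange : Set.MapsTo (fun t => k (t - 1)) (jumpTimes k T) (Icc 1 (k T)) :=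
    (mapsTo_jumpTimes hk).mono_right (Icc_subset_Icc_left hk₀)
  have hinv : ∑ t ∈ jumpTimes k T, 1 / √(k (t - 1) : ℝ) ≤ 2 * √(k T) := by
    rw [← sum_image (f := fun j : ℕ => 1 / √(j : ℝ)) hinj]
    exact (sum_le_sum_of_subset_of_nonneg (image_subset_iff.2 hrange)
      fun _ _ _ => by positivity).trans (sum_Icc_one_div_sqrt_le _)
  have hcard : #(jumpTimes k T) ≤ k T := by
    simpa using card_le_card_of_injOn _ hrange hinj
  have hCS : ∑ t ∈ jumpTimes k T, √1 * √(Γ t / (2 * γ (k (t - 1))) ^ 2)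
      ≤ √(k T) * √(1 / 3 * ∑ s ∈ Icc 1 T, w s) := by
    refine (Real.sum_sqrt_mul_sqrt_le _ (fun _ => zero_le_one)
      fun t => div_nonneg (sum_nonneg fun s _ => mul_nonneg (sq_nonneg _) (hw s))
        (sq_nonneg _)).trans ?_
    gcongr
    · simpa using hcard
    · exact sum_jumpTimes_sq_le hγ₀ hγ hk hw T
  linarith

lemma sum_inv_mul_sub_sq_norm_le {E : Type*} [SeminormedAddCommGroup E] (hγ₀ : 0 < γ₀)
    (hγ : ∀ j, γ j = γ₀ * 2 ^ j) (hk : Monotone k) (hk₀ : 1 ≤ k 0) (hw : ∀ s, 0 ≤ w s)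
    {x : ℕ → E} {y : E} (hx : ∀ t, 1 ≤ t → ‖x 1 - x t‖
      ≤ 2 * γ (k (t - 1)) / √(k (t - 1)) + √(∑ s ∈ Ico 1 t, γ (k s) ^ 2 * w s)) (T : ℕ) :
    ∑ t ∈ Icc 1 T, (2 * γ (k t))⁻¹ * (‖x t - y‖ ^ 2 - ‖x (t + 1) - y‖ ^ 2)
      ≤ 2 * ‖x 1 - y‖ * (√(k T) * (2 + √(1 / 3 * ∑ s ∈ Icc 1 T, w s))) := by
  have hβ : ∀ j, 0 < (2 * γ j)⁻¹ := fun j => by rw [hγ]; positivity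
  have hβanti : Antitone fun j => (2 * γ j)⁻¹ := fun i j hij => by
    simp only [hγ]
    gcongr
    norm_num
  calc _ ≤ ∑ t ∈ jumpTimes k T, (2 * γ (k (t - 1)))⁻¹ * (2 * ‖x 1 - y‖ * ‖x 1 - x t‖) :=
        sum_mul_sub_le_sum_jumpTimes hk hβanti (fun j => (hβ j).le)
          (fun t => sq_norm_sub_sub_sq_norm_sub_le _ _ _) (fun t => by positivity) T
    _ ≤ 2 * ‖x 1 - y‖ * ∑ t ∈ jumpTimes k T, (2 * γ (k (t - 1)))⁻¹ *
          (2 * γ (k (t - 1)) / √(k (t - 1)) + √(∑ s ∈ Ico 1 t, γ (k s) ^ 2 * w s)) := by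
        rw [mul_sum]
        refine sum_le_sum fun t ht => ?_
        rw [mul_left_comm]
        gcongr
        · exact (hβ _).le
        · exact hx t (le_of_mem_jumpTimes ht).1
    _ ≤ _ := by
        gcongr
        exact sum_jumpTimes_le hγ₀ hγ hk hk₀ hw T

end DoublingSteps

theorem free_adagrad_meta_regret_general
    {d : ℕ} {Θ : Set (EuclideanSpace ℝ (Fin d))}
    (hΘcv : Convex ℝ Θ)
    {f : EuclideanSpace ℝ (Fin d) → ℝ}
    {xstar : EuclideanSpace ℝ (Fin d)} (hxstarΘ : xstar ∈ Θ)
    (hmin : ∀ y ∈ Θ, f xstar ≤ f y)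
    (proj : EuclideanSpace ℝ (Fin d) → EuclideanSpace ℝ (Fin d))
    (hprojΘ : ∀ z, proj z ∈ Θ)
    (hproj : ∀ z, ∀ y ∈ Θ, ‖z - proj z‖ ≤ ‖z - y‖)
    {γ₀ : ℝ} (hγ₀ : 0 < γ₀)
    (γ : ℕ → ℝ) (hγ : ∀ j, γ j = γ₀ * 2 ^ j)
    (h : ℕ → ℝ) (hhpos : ∀ t, 1 ≤ t → 0 < h t)
    (hhmono : ∀ s t, 1 ≤ s → s ≤ t → h s ≤ h t)
    (x g : ℕ → EuclideanSpace ℝ (Fin d)) (k : ℕ → ℕ) (Γsq : ℕ → ℝ)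
    (hx1Θ : x 1 ∈ Θ)
    (hg : ∀ t, 1 ≤ t → ∀ y, f (x t) + ⟪g t, y - x t⟫ ≤ f y)
    (hk0 : k 0 = 1) (hΓ1 : Γsq 1 = 0)
    (xplus : ℕ → ℕ → EuclideanSpace ℝ (Fin d))
    (hxplus : ∀ t j, 1 ≤ t → xplus t j = proj (x t - (γ j / h t) • g t))
    (B : ℕ → ℕ → ℝ)
    (hB : ∀ t j, 1 ≤ t → B t j =
        2 * γ j / Real.sqrt j
          + Real.sqrt (Γsq t + γ j ^ 2 * ‖g t‖ ^ 2 / h t ^ 2))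
    (hkmono : ∀ t, 1 ≤ t → k (t - 1) ≤ k t)
    (hksel : ∀ t, 1 ≤ t → ‖xplus t (k t) - x 1‖ ≤ B t (k t))
    (hxrec : ∀ t, 1 ≤ t → x (t + 1) = xplus t (k t))
    (hΓrec : ∀ t, 1 ≤ t → Γsq (t + 1) = Γsq t + γ (k t) ^ 2 * ‖g t‖ ^ 2 / h t ^ 2)
    (T : ℕ) :
    ∑ t ∈ Finset.Icc 1 T, (f (x t) - f xstar)
      ≤ h (T + 1) *
          (2 * ‖x 1 - xstar‖ * Real.sqrt (k T)
              * (2 + Real.sqrt ((1 / 3) * ∑ t ∈ Finset.Icc 1 T, ‖g t‖ ^ 2 / h t ^ 2))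
            + γ (k T) * ∑ t ∈ Finset.Icc 1 T, ‖g t‖ ^ 2 / h t ^ 2) := by
  set w : ℕ → ℝ := fun t => ‖g t‖ ^ 2 / h t ^ 2
  have hγpos : ∀ j, 0 < γ j := fun j => by rw [hγ]; positivity
  have hk : Monotone k := monotone_nat_of_le_succ fun t => by simpa using hkmono (t + 1) (by omega)
  have hΓ : ∀ t, 1 ≤ t → Γsq t = ∑ s ∈ Ico 1 t, γ (k s) ^ 2 * w s := by
    intro t ht
    induction t, ht using Nat.le_induction with
    | base => simpa using hΓ1
    | succ t ht ih => rw [hΓrec t ht, ih, sum_Ico_succ_top ht, mul_div_assoc]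
  have hxΘ : ∀ t, 1 ≤ t → x t ∈ Θ := by
    intro t ht
    induction t, ht using Nat.le_induction with
    | base => exact hx1Θ
    | succ t ht _ => rw [hxrec t ht, hxplus t _ ht]; exact hprojΘ _
  have hdist : ∀ t, 1 ≤ t → ‖x 1 - x t‖
      ≤ 2 * γ (k (t - 1)) / √(k (t - 1)) + √(∑ s ∈ Ico 1 t, γ (k s) ^ 2 * w s) := by
    rintro (_ | _ | t) ht
    · omega
    · rw [sub_self, norm_zero]
      exact add_nonneg (div_nonneg (mul_pos two_pos (hγpos _)).le (Real.sqrt_nonneg _))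
        (Real.sqrt_nonneg _)
    · have := hksel (t + 1) (by omega)
      rwa [hB _ _ (by omega), ← hxrec _ (by omega), ← hΓrec _ (by omega), norm_sub_rev,
        hΓ _ (by omega)] at this
  have hgrad : ∑ t ∈ Icc 1 T, γ (k t) / 2 * w t ≤ γ (k T) * ∑ t ∈ Icc 1 T, w t := by
    rw [mul_sum]
    refine sum_le_sum fun t ht => mul_le_mul_of_nonneg_right ?_ (by positivity)
    have : γ (k t) ≤ γ (k T) := by simp only [hγ]; gcongr; exacts [one_le_two, hk (mem_Icc.1 ht).2]
    linarith [hγpos (k t)]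
  calc _ ≤ h (T + 1) * (_ + _) := sum_sub_le_of_projected_steps (fun t => hγpos (k t)) hhpos
        hhmono hg (fun t ht => hmin _ (hxΘ t ht)) (fun t ht => by
          rw [hxrec t ht, hxplus t _ ht]
          exact norm_proj_sub_le hΘcv hprojΘ hproj _ hxstarΘ) T
    _ ≤ _ := by
        rw [mul_assoc (2 * ‖x 1 - xstar‖)]
        gcongr
        · exact (hhpos _ (by omega)).le
        · exact sum_inv_mul_sub_sq_norm_le hγ₀ hγ hk hk0.ge (fun t => by positivity) hdist T

/-- meta regret bound for Free AdaGrad with any positive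
non-decreasing step-size normalizing sequence `(h_t)`. -/
theorem free_adagrad_meta_regret
    {d : ℕ} {Θ : Set (EuclideanSpace ℝ (Fin d))}
    (hΘne : Θ.Nonempty) (hΘcl : IsClosed Θ) (hΘcv : Convex ℝ Θ)
    {f : EuclideanSpace ℝ (Fin d) → ℝ}
    (hfconv : ConvexOn ℝ Set.univ f)
    {xstar : EuclideanSpace ℝ (Fin d)} (hxstarΘ : xstar ∈ Θ)
    (hmin : ∀ y ∈ Θ, f xstar ≤ f y)
    (proj : EuclideanSpace ℝ (Fin d) → EuclideanSpace ℝ (Fin d))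
    (hprojΘ : ∀ z, proj z ∈ Θ)
    (hproj : ∀ z, ∀ y ∈ Θ, ‖z - proj z‖ ≤ ‖z - y‖)
    {γ₀ : ℝ} (hγ₀ : 0 < γ₀)
    (γ : ℕ → ℝ) (hγ : ∀ j, γ j = γ₀ * 2 ^ j)
    (h : ℕ → ℝ) (hhpos : ∀ t, 1 ≤ t → 0 < h t)
    (hhmono : ∀ s t, 1 ≤ s → s ≤ t → h s ≤ h t)
    (x g : ℕ → EuclideanSpace ℝ (Fin d)) (k : ℕ → ℕ) (Γsq : ℕ → ℝ)
    (hx1Θ : x 1 ∈ Θ)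
    (hg : ∀ t, 1 ≤ t → ∀ y, f (x t) + ⟪g t, y - x t⟫ ≤ f y)
    (hk0 : k 0 = 1) (hΓ1 : Γsq 1 = 0)
    (xplus : ℕ → ℕ → EuclideanSpace ℝ (Fin d))
    (hxplus : ∀ t j, 1 ≤ t → xplus t j = proj (x t - (γ j / h t) • g t))
    (B : ℕ → ℕ → ℝ)
    (hB : ∀ t j, 1 ≤ t → B t j =
        2 * γ j / Real.sqrt j
          + Real.sqrt (Γsq t + γ j ^ 2 * ‖g t‖ ^ 2 / h t ^ 2))
    (hkmono : ∀ t, 1 ≤ t → k (t - 1) ≤ k t)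
    (hksel : ∀ t, 1 ≤ t → ‖xplus t (k t) - x 1‖ ≤ B t (k t))
    (hkmin : ∀ t, 1 ≤ t → ∀ j, k (t - 1) ≤ j → j < k t →
        B t j < ‖xplus t j - x 1‖)
    (hxrec : ∀ t, 1 ≤ t → x (t + 1) = xplus t (k t))
    (hΓrec : ∀ t, 1 ≤ t → Γsq (t + 1) = Γsq t + γ (k t) ^ 2 * ‖g t‖ ^ 2 / h t ^ 2)
    (T : ℕ) (hT : 1 ≤ T) :
    ∑ t ∈ Finset.Icc 1 T, (f (x t) - f xstar)
      ≤ h (T + 1) *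
          (2 * ‖x 1 - xstar‖ * Real.sqrt (k T)
              * (2 + Real.sqrt ((1 / 3) * ∑ t ∈ Finset.Icc 1 T, ‖g t‖ ^ 2 / h t ^ 2))
            + γ (k T) * ∑ t ∈ Finset.Icc 1 T, ‖g t‖ ^ 2 / h t ^ 2) :=
  free_adagrad_meta_regret_general hΘcv hxstarΘ hmin proj hprojΘ hproj hγ₀ γ hγ h hhpos hhmono x g k
    Γsq hx1Θ hg hk0 hΓ1 xplus hxplus B hB hkmono hksel hxrec hΓrec T
end

section
/- Let k* ≥ 1 be an integer such that γ₀·2^{k*−1} ≤ max(‖x₁ − x*‖, γ₀) ≤ γ₀·2^{k*}. Then for every integer T ≥ 2, the Free AdaGrad iterates (run with any positive non-decreasing sequence (h_t)) satisfy k_T ≤ k* + (1/2)·log₂(k*) + 5/4 and γ_{k_T} ≤ (5/2)·√(k*)·γ₀·2^{k*}. Moreover k_T = 1 whenever k* = 1. -/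
open scoped RealInnerProductSpace

/-!
Since `g_t` is a subgradient and `f (x_t) ≥ f x*`, we have `⟪g_t, x_t - x*⟫ ≥ 0`, so a gradient
step followed by the projection (nonexpansive towards points of the convex set `Θ`) raises
`‖x - x*‖²` by at most the squared step length. Hence `‖x_t - x*‖² ≤ ‖x₁ - x*‖² + Γ_t²`, and every
candidate satisfies `‖x_t⁺(j) - x₁‖ ≤ 2‖x₁ - x*‖ + √(Γ_t² + γ_j²‖g_t‖²/h_t²)`. A rejected index `j`
therefore has `γ_j < ‖x₁ - x*‖ √j`, i.e. `2^j < 2^{k*} √j`. Either `k_T = 1` or `k_T - 1` was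
rejected at some step; and `2^m < 2^{k*} √m` with `m = k* + n > k*` means `4^n < k* + n ≤ k* + 4^n/4`,
so `4^n < 4k*/3`, which gives `n ≤ ½ log₂ k* + ¼` and `m < 4k*/3`.
-/

theorem norm_sub_le_two_mul_add_sqrt {E : Type*} [SeminormedAddCommGroup E] {a b c : E} {R : ℝ}
    (h : ‖a - c‖ ^ 2 ≤ ‖b - c‖ ^ 2 + R) : ‖a - b‖ ≤ 2 * ‖b - c‖ + √R := by
  have hR : R ≤ √R ^ 2 := by
    rcases le_or_gt 0 R with hR | hR
    · rw [Real.sq_sqrt hR]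
    · nlinarith [Real.sqrt_nonneg R]
  have hac : ‖a - c‖ ≤ ‖b - c‖ + √R :=
    abs_le_of_sq_le_sq' (by nlinarith [norm_nonneg (b - c), Real.sqrt_nonneg R])
      (by positivity) |>.2
  calc ‖a - b‖ ≤ ‖a - c‖ + ‖c - b‖ := norm_sub_le_norm_sub_add_norm_sub a c b
    _ ≤ 2 * ‖b - c‖ + √R := by rw [norm_sub_rev c b]; linarith

theorem lt_norm_sub_mul_of_two_mul_div_add_sqrt_lt {E : Type*} [SeminormedAddCommGroup E]
    {a b c : E} {R γ s : ℝ} (hs : 0 < s) (hdist : ‖a - c‖ ^ 2 ≤ ‖b - c‖ ^ 2 + R)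
    (hrej : 2 * γ / s + √R < ‖a - b‖) : γ < ‖b - c‖ * s := by
  have := (norm_sub_le_two_mul_add_sqrt hdist).trans_lt' hrej
  rw [mul_div_assoc] at this
  rw [← div_lt_iff₀ hs]
  linarith

section InnerProductSpace

variable {F : Type*} [NormedAddCommGroup F] [InnerProductSpace ℝ F]

theorem norm_sub_le_of_forall_norm_sub_le {K : Set F} (hK : Convex ℝ K) {z p y : F} (hp : p ∈ K)
    (hmin : ∀ w ∈ K, ‖z - p‖ ≤ ‖z - w‖) (hy : y ∈ K) : ‖p - y‖ ≤ ‖z - y‖ := by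
  have : Nonempty K := ⟨⟨p, hp⟩⟩
  have hbdd : BddBelow (Set.range fun w : K => ‖z - w‖) :=
    ⟨0, by rintro _ ⟨w, rfl⟩; exact norm_nonneg _⟩
  have hinf : ‖z - p‖ = ⨅ w : K, ‖z - w‖ :=
    le_antisymm (le_ciInf fun w => hmin w w.2) (ciInf_le hbdd ⟨p, hp⟩)
  have hobtuse : ⟪z - p, y - p⟫ ≤ 0 := (norm_eq_iInf_iff_real_inner_le_zero hK hp).mp hinf y hy
  have hexpand : ‖z - y‖ ^ 2 = ‖z - p‖ ^ 2 - 2 * ⟪z - p, y - p⟫ + ‖p - y‖ ^ 2 := by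
    rw [show z - y = (z - p) - (y - p) by abel, norm_sub_sq_real, norm_sub_rev y p]
  exact pow_le_pow_iff_left₀ (norm_nonneg _) (norm_nonneg _) two_ne_zero |>.mp
    (by nlinarith [sq_nonneg ‖z - p‖])

theorem norm_sub_sub_sq_le {x v y : F} (h : 0 ≤ ⟪v, x - y⟫) :
    ‖x - v - y‖ ^ 2 ≤ ‖x - y‖ ^ 2 + ‖v‖ ^ 2 := by
  rw [show x - v - y = (x - y) - v by abel, norm_sub_sq_real, real_inner_comm]
  linarith

end InnerProductSpace

theorem four_mul_le_four_pow (n : ℕ) : 4 * n ≤ 4 ^ n := by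
  induction n with
  | zero => simp
  | succ n ih => rw [pow_succ]; have := Nat.one_le_pow n 4 (by norm_num); omega

theorem exists_le_lt_succ_of_le_lt {u : ℕ → ℕ} {j T : ℕ} (h0 : u 0 ≤ j) (hT : j < u T) :
    ∃ t, u t ≤ j ∧ j < u (t + 1) := by
  induction T with
  | zero => omega
  | succ T ih =>
    rcases lt_or_ge j (u T) with hj | hj
    · exact ih hj
    · exact ⟨T, hj, hT⟩

theorem le_add_logb_of_two_pow_lt_two_pow_mul_sqrt {m k : ℕ} (hk : 1 ≤ k)
    (h : (2 : ℝ) ^ m < 2 ^ k * √m) :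
    (m : ℝ) ≤ k + 1 / 2 * Real.logb 2 k + 1 / 4 ∧ 3 * m < 4 * k := by
  have hlog : 0 ≤ Real.logb 2 k := Real.logb_nonneg one_lt_two (by exact_mod_cast hk)
  rcases le_or_gt m k with hmk | hkm
  · have : (m : ℝ) ≤ k := by exact_mod_cast hmk
    exact ⟨by linarith, by omega⟩
  obtain ⟨n, rfl⟩ : ∃ n, m = k + n := ⟨m - k, by omega⟩
  have h2n : (2 : ℝ) ^ n < √(k + n : ℕ) := by
    rw [pow_add] at h
    exact lt_of_mul_lt_mul_left h (by positivity)
  have h4n : (4 : ℝ) ^ n < k + n := by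
    rw [show (4 : ℝ) ^ n = (2 ^ n) ^ 2 by rw [← pow_mul, mul_comm, pow_mul]; norm_num]
    exact_mod_cast (Real.lt_sqrt (by positivity)).mp h2n
  have hn : 4 * (n : ℝ) ≤ 4 ^ n := by exact_mod_cast four_mul_le_four_pow n
  have hk4 : (4 : ℝ) ^ n < 4 / 3 * k := by linarith
  refine ⟨?_, ?_⟩
  · have hlog43 : Real.logb 2 (4 / 3) ≤ 1 / 2 := by
      rw [Real.logb_le_iff_le_rpow one_lt_two (by norm_num), ← Real.sqrt_eq_rpow,
        Real.le_sqrt (by norm_num) (by norm_num)]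
      norm_num
    have hn_log : 2 * (n : ℝ) < 1 / 2 + Real.logb 2 k := by
      calc 2 * (n : ℝ) = Real.logb 2 (4 ^ n) := by
            rw [Real.logb_pow, show (4 : ℝ) = 2 ^ 2 by norm_num, Real.logb_pow,
              Real.logb_self_eq_one one_lt_two]
            ring
        _ < Real.logb 2 (4 / 3 * k) := Real.logb_lt_logb one_lt_two (by positivity) hk4
        _ = Real.logb 2 (4 / 3) + Real.logb 2 k := Real.logb_mul (by norm_num) (by positivity)
        _ ≤ 1 / 2 + Real.logb 2 k := by linarith
    push_cast
    linarith
  · have : 3 * (n : ℝ) < k := by linarith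
    have : 3 * n < k := by exact_mod_cast this
    omega

namespace FreeAdaGrad

theorem phase_bounds {γ₀ : ℝ} (hγ₀ : 0 ≤ γ₀) {K kstar : ℕ} (hk : 1 ≤ kstar)
    (hK : K = 1 ∨ ∃ m, K = m + 1 ∧ (2 : ℝ) ^ m < 2 ^ kstar * √m) :
    (K : ℝ) ≤ kstar + 1 / 2 * Real.logb 2 kstar + 5 / 4 ∧
      γ₀ * 2 ^ K ≤ 5 / 2 * √kstar * (γ₀ * 2 ^ kstar) ∧ (kstar = 1 → K = 1) := by
  have hk' : (1 : ℝ) ≤ kstar := by exact_mod_cast hk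
  have hsqrt : 1 ≤ √(kstar : ℝ) := Real.one_le_sqrt.mpr hk'
  rcases hK with rfl | ⟨m, rfl, hm⟩
  · have : (2 : ℝ) ^ 1 ≤ 2 ^ kstar := pow_le_pow_right₀ one_le_two hk
    refine ⟨by linarith [Real.logb_nonneg one_lt_two hk'], ?_, fun _ => rfl⟩
    nlinarith [mul_nonneg hγ₀ (sub_nonneg.mpr hsqrt)]
  obtain ⟨hlog, hlin⟩ := le_add_logb_of_two_pow_lt_two_pow_mul_sqrt hk hm
  refine ⟨by push_cast; linarith, ?_, ?_⟩
  · have hsqrt_m : √(m : ℝ) ≤ 5 / 4 * √kstar := by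
      rw [Real.sqrt_le_iff]
      refine ⟨by positivity, ?_⟩
      rw [mul_pow, Real.sq_sqrt (by positivity)]
      have : 3 * (m : ℝ) < 4 * kstar := by exact_mod_cast hlin
      linarith
    calc γ₀ * 2 ^ (m + 1) = 2 * γ₀ * 2 ^ m := by ring
      _ ≤ 2 * γ₀ * (2 ^ kstar * (5 / 4 * √kstar)) := by gcongr; exact hm.le.trans (by gcongr)
      _ = 5 / 2 * √kstar * (γ₀ * 2 ^ kstar) := by ring
  · rintro rfl
    have : m ≤ 1 := by omega
    interval_cases m <;> norm_num at hm

section Run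

variable {F : Type*} [NormedAddCommGroup F] [InnerProductSpace ℝ F] {Θ : Set F} {proj : F → F}
  {f : F → ℝ} {xstar : F} {γ h Γsq : ℕ → ℝ} {x g : ℕ → F} {xplus : ℕ → ℕ → F} {k : ℕ → ℕ}

theorem sq_dist_candidate_le (hΘ : Convex ℝ Θ) (hprojΘ : ∀ z, proj z ∈ Θ)
    (hproj : ∀ z, ∀ y ∈ Θ, ‖z - proj z‖ ≤ ‖z - y‖) (hxstarΘ : xstar ∈ Θ)
    (hmin : ∀ y ∈ Θ, f xstar ≤ f y) (hg : ∀ t, 1 ≤ t → ∀ y, f (x t) + ⟪g t, y - x t⟫ ≤ f y)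
    (hh : ∀ t, 1 ≤ t → 0 < h t) (hγ : ∀ j, 0 ≤ γ j) (hx1Θ : x 1 ∈ Θ)
    (hxplus : ∀ t j, 1 ≤ t → xplus t j = proj (x t - (γ j / h t) • g t))
    (hxrec : ∀ t, 1 ≤ t → x (t + 1) = xplus t (k t)) (hΓ1 : Γsq 1 = 0)
    (hΓrec : ∀ t, 1 ≤ t → Γsq (t + 1) = Γsq t + γ (k t) ^ 2 * ‖g t‖ ^ 2 / h t ^ 2)
    {t : ℕ} (ht : 1 ≤ t) (j : ℕ) :
    ‖xplus t j - xstar‖ ^ 2 ≤ ‖x 1 - xstar‖ ^ 2 + (Γsq t + γ j ^ 2 * ‖g t‖ ^ 2 / h t ^ 2) := by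
  have hstep : ∀ t, 1 ≤ t → x t ∈ Θ → ∀ j,
      ‖xplus t j - xstar‖ ^ 2 ≤ ‖x t - xstar‖ ^ 2 + γ j ^ 2 * ‖g t‖ ^ 2 / h t ^ 2 := by
    intro t ht hxt j
    have hdescent : 0 ≤ ⟪g t, x t - xstar⟫ := by
      have := hg t ht xstar
      rw [← neg_sub, inner_neg_right] at this
      linarith [hmin _ hxt]
    have hη : 0 ≤ γ j / h t := div_nonneg (hγ j) (hh t ht).le
    calc ‖xplus t j - xstar‖ ^ 2 ≤ ‖x t - (γ j / h t) • g t - xstar‖ ^ 2 := by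
          rw [hxplus t j ht]
          gcongr
          exact norm_sub_le_of_forall_norm_sub_le hΘ (hprojΘ _) (hproj _) hxstarΘ
      _ ≤ ‖x t - xstar‖ ^ 2 + ‖(γ j / h t) • g t‖ ^ 2 :=
          norm_sub_sub_sq_le (by rw [real_inner_smul_left]; positivity)
      _ = ‖x t - xstar‖ ^ 2 + γ j ^ 2 * ‖g t‖ ^ 2 / h t ^ 2 := by
          rw [norm_smul, Real.norm_eq_abs, mul_pow, sq_abs, div_pow]; ring
  have hinv : ∀ t, 1 ≤ t → x t ∈ Θ ∧ ‖x t - xstar‖ ^ 2 ≤ ‖x 1 - xstar‖ ^ 2 + Γsq t := by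
    intro t ht
    induction t, ht using Nat.le_induction with
    | base => exact ⟨hx1Θ, by rw [hΓ1, add_zero]⟩
    | succ t ht ih =>
      refine ⟨by rw [hxrec t ht, hxplus t _ ht]; exact hprojΘ _, ?_⟩
      rw [hxrec t ht, hΓrec t ht]
      linarith [hstep t ht ih.1 (k t), ih.2]
  linarith [hstep t ht (hinv t ht).1 j, (hinv t ht).2]

end Run

end FreeAdaGrad

theorem free_adagrad_number_of_phases_general
    {d : ℕ} {Θ : Set (EuclideanSpace ℝ (Fin d))}
    (hΘcv : Convex ℝ Θ)
    {f : EuclideanSpace ℝ (Fin d) → ℝ}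
    {xstar : EuclideanSpace ℝ (Fin d)} (hxstarΘ : xstar ∈ Θ)
    (hmin : ∀ y ∈ Θ, f xstar ≤ f y)
    (proj : EuclideanSpace ℝ (Fin d) → EuclideanSpace ℝ (Fin d))
    (hprojΘ : ∀ z, proj z ∈ Θ)
    (hproj : ∀ z, ∀ y ∈ Θ, ‖z - proj z‖ ≤ ‖z - y‖)
    {γ₀ : ℝ} (hγ₀ : 0 < γ₀)
    (γ : ℕ → ℝ) (hγ : ∀ j, γ j = γ₀ * 2 ^ j)
    (h : ℕ → ℝ) (hhpos : ∀ t, 1 ≤ t → 0 < h t)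
    (x g : ℕ → EuclideanSpace ℝ (Fin d)) (k : ℕ → ℕ) (Γsq : ℕ → ℝ)
    (hx1Θ : x 1 ∈ Θ)
    (hg : ∀ t, 1 ≤ t → ∀ y, f (x t) + ⟪g t, y - x t⟫ ≤ f y)
    (hk0 : k 0 = 1) (hΓ1 : Γsq 1 = 0)
    (xplus : ℕ → ℕ → EuclideanSpace ℝ (Fin d))
    (hxplus : ∀ t j, 1 ≤ t → xplus t j = proj (x t - (γ j / h t) • g t))
    (B : ℕ → ℕ → ℝ)
    (hB : ∀ t j, 1 ≤ t → B t j =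
        2 * γ j / Real.sqrt j
          + Real.sqrt (Γsq t + γ j ^ 2 * ‖g t‖ ^ 2 / h t ^ 2))
    (hkmono : ∀ t, 1 ≤ t → k (t - 1) ≤ k t)
    (hkmin : ∀ t, 1 ≤ t → ∀ j, k (t - 1) ≤ j → j < k t →
        B t j < ‖xplus t j - x 1‖)
    (hxrec : ∀ t, 1 ≤ t → x (t + 1) = xplus t (k t))
    (hΓrec : ∀ t, 1 ≤ t → Γsq (t + 1) = Γsq t + γ (k t) ^ 2 * ‖g t‖ ^ 2 / h t ^ 2)
    (kstar : ℕ) (hkstar1 : 1 ≤ kstar)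
    (hkstar_ub : max ‖x 1 - xstar‖ γ₀ ≤ γ₀ * 2 ^ kstar)
    (T : ℕ) :
    (k T : ℝ) ≤ kstar + (1 / 2) * Real.logb 2 kstar + 5 / 4 ∧
      γ (k T) ≤ (5 / 2) * Real.sqrt kstar * (γ₀ * 2 ^ kstar) ∧
      (kstar = 1 → k T = 1) := by
  have hγnn : ∀ j, 0 ≤ γ j := fun j => by rw [hγ]; positivity
  have hrej : ∀ t j, k t ≤ j → j < k (t + 1) → 1 ≤ j → (2 : ℝ) ^ j < 2 ^ kstar * √j := by
    intro t j hjt hjt' hj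
    have hfail := hkmin (t + 1) (Nat.le_add_left 1 t) j hjt hjt'
    rw [hB _ _ (Nat.le_add_left 1 t)] at hfail
    have hγj := lt_norm_sub_mul_of_two_mul_div_add_sqrt_lt
      (Real.sqrt_pos.mpr (by exact_mod_cast hj)) (FreeAdaGrad.sq_dist_candidate_le hΘcv hprojΘ
        hproj hxstarΘ hmin hg hhpos hγnn hx1Θ hxplus hxrec hΓ1 hΓrec (Nat.le_add_left 1 t) j) hfail
    have hD : ‖x 1 - xstar‖ ≤ γ₀ * 2 ^ kstar := (le_max_left _ _).trans hkstar_ub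
    rw [hγ] at hγj
    exact lt_of_mul_lt_mul_left (hγj.trans_le (by rw [← mul_assoc]; gcongr)) hγ₀.le
  have hmono : Monotone k :=
    monotone_nat_of_le_succ fun t => hkmono (t + 1) (Nat.le_add_left 1 t)
  have hkT : k T = 1 ∨ ∃ m, k T = m + 1 ∧ (2 : ℝ) ^ m < 2 ^ kstar * √m := by
    rcases (show 1 ≤ k T from hk0 ▸ hmono (Nat.zero_le T)).eq_or_lt with h1 | h2
    · exact Or.inl h1.symm
    · obtain ⟨t, ht, ht'⟩ :=
        exists_le_lt_succ_of_le_lt (u := k) (j := k T - 1) (T := T) (by omega) (by omega)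
      exact Or.inr ⟨k T - 1, by omega, hrej t _ ht ht' (by omega)⟩
  simpa only [hγ] using FreeAdaGrad.phase_bounds hγ₀.le hkstar1 hkT

/-- bound on the number of doubling phases of Free AdaGrad. -/
theorem free_adagrad_number_of_phases
    {d : ℕ} {Θ : Set (EuclideanSpace ℝ (Fin d))}
    (hΘne : Θ.Nonempty) (hΘcl : IsClosed Θ) (hΘcv : Convex ℝ Θ)
    {f : EuclideanSpace ℝ (Fin d) → ℝ}
    (hfconv : ConvexOn ℝ Set.univ f)
    {xstar : EuclideanSpace ℝ (Fin d)} (hxstarΘ : xstar ∈ Θ)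
    (hmin : ∀ y ∈ Θ, f xstar ≤ f y)
    (proj : EuclideanSpace ℝ (Fin d) → EuclideanSpace ℝ (Fin d))
    (hprojΘ : ∀ z, proj z ∈ Θ)
    (hproj : ∀ z, ∀ y ∈ Θ, ‖z - proj z‖ ≤ ‖z - y‖)
    {γ₀ : ℝ} (hγ₀ : 0 < γ₀)
    (γ : ℕ → ℝ) (hγ : ∀ j, γ j = γ₀ * 2 ^ j)
    (h : ℕ → ℝ) (hhpos : ∀ t, 1 ≤ t → 0 < h t)
    (hhmono : ∀ s t, 1 ≤ s → s ≤ t → h s ≤ h t)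
    (x g : ℕ → EuclideanSpace ℝ (Fin d)) (k : ℕ → ℕ) (Γsq : ℕ → ℝ)
    (hx1Θ : x 1 ∈ Θ)
    (hg : ∀ t, 1 ≤ t → ∀ y, f (x t) + ⟪g t, y - x t⟫ ≤ f y)
    (hk0 : k 0 = 1) (hΓ1 : Γsq 1 = 0)
    (xplus : ℕ → ℕ → EuclideanSpace ℝ (Fin d))
    (hxplus : ∀ t j, 1 ≤ t → xplus t j = proj (x t - (γ j / h t) • g t))
    (B : ℕ → ℕ → ℝ)
    (hB : ∀ t j, 1 ≤ t → B t j =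
        2 * γ j / Real.sqrt j
          + Real.sqrt (Γsq t + γ j ^ 2 * ‖g t‖ ^ 2 / h t ^ 2))
    (hkmono : ∀ t, 1 ≤ t → k (t - 1) ≤ k t)
    (hksel : ∀ t, 1 ≤ t → ‖xplus t (k t) - x 1‖ ≤ B t (k t))
    (hkmin : ∀ t, 1 ≤ t → ∀ j, k (t - 1) ≤ j → j < k t →
        B t j < ‖xplus t j - x 1‖)
    (hxrec : ∀ t, 1 ≤ t → x (t + 1) = xplus t (k t))
    (hΓrec : ∀ t, 1 ≤ t → Γsq (t + 1) = Γsq t + γ (k t) ^ 2 * ‖g t‖ ^ 2 / h t ^ 2)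
    (kstar : ℕ) (hkstar1 : 1 ≤ kstar)
    (hkstar_lb : γ₀ * 2 ^ (kstar - 1) ≤ max ‖x 1 - xstar‖ γ₀)
    (hkstar_ub : max ‖x 1 - xstar‖ γ₀ ≤ γ₀ * 2 ^ kstar)
    (T : ℕ) (hT : 2 ≤ T) :
    (k T : ℝ) ≤ kstar + (1 / 2) * Real.logb 2 kstar + 5 / 4 ∧
      γ (k T) ≤ (5 / 2) * Real.sqrt kstar * (γ₀ * 2 ^ kstar) ∧
      (kstar = 1 → k T = 1) :=
  free_adagrad_number_of_phases_general hΘcv hxstarΘ hmin proj hprojΘ hproj hγ₀ γ hγ h hhpos x g k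
    Γsq hx1Θ hg hk0 hΓ1 xplus hxplus B hB hkmono hkmin hxrec hΓrec kstar hkstar1 hkstar_ub T
end

section
/- Let (X_s)_{s≥1} be a martingale difference sequence with respect to a filtration (F_s)_{s≥0} (i.e., X_s is F_s-measurable and E[X_s | F_{s−1}] = 0) with |X_s| ≤ K almost surely for all s, and let 𝔖_t² = Σ_{τ=1}^t E[X_τ² | F_{τ−1}]. Then for all δ ∈ (0,1) and all integers T ≥ 1, with probability at least 1 − δ: max_{t ≤ T} Σ_{τ=1}^t X_τ ≤ 2·𝔖_T·√( ln( log₂(2T)/δ ) ) + 3·K·ln( log₂(2T)/δ ). -/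
/-!
For `0 ≤ λ ≤ 1/K` the bound `exp y ≤ 1 + y + y²/2 + (2/9)|y|³` on `|y| ≤ 1` gives
`E[exp(λ X_s) | F_{s-1}] ≤ exp(ψ(λ) E[X_s² | F_{s-1}])` with `ψ(λ) = λ²/2 + (2/9) λ³ K`.
Hence `exp(λ M_t - ψ(λ) 𝔖_t²)`, `M_t` the partial sums, is a nonnegative supermartingale, and
Ville's maximal inequality gives `P(∃ t ≤ T, λ M_t - ψ(λ) 𝔖_t² ≥ c) ≤ e^{-c}`.

The best `λ` depends on the random `𝔖_T²`, so one peels: `𝔖_T² ≤ K² T` lies within a factor 2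
of one of the dyadic levels `K² T / 2^j`, `j ≤ ⌊log₂ T⌋`, or below the last one. Tuning `λ` to
each level and taking a union bound over the `⌊log₂ T⌋ + 1 ≤ log₂(2T)` levels costs the factor
`log₂(2T)` that `c = ln(log₂(2T)/δ)` absorbs. The lowest level needs `c ≥ 1/4`, which holds
unless `T = 1`; then `𝔖_1²` is `F_0`-measurable and `λ` can be chosen from it directly.
-/

open MeasureTheory Real

noncomputable def freedmanPsi (K l : ℝ) : ℝ := l ^ 2 / 2 + 2 / 9 * l ^ 3 * K

lemma freedmanPsi_nonneg {K l : ℝ} (hK : 0 ≤ K) (hl : 0 ≤ l) : 0 ≤ freedmanPsi K l := by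
  unfold freedmanPsi; positivity

-- `2 / 9 = 4 / (3! * 3)` is the remainder factor of `Real.exp_bound` at order 3.
lemma Real.exp_le_one_add_add_sq_add_abs_cube {y : ℝ} (hy : |y| ≤ 1) :
    exp y ≤ 1 + y + y ^ 2 / 2 + 2 / 9 * |y| ^ 3 := by
  have h := (abs_le.1 (Real.exp_bound hy (n := 3) (by norm_num))).2
  norm_num [Finset.sum_range_succ, Nat.factorial] at h
  linarith

lemma exp_mul_le_freedmanPsi {K l x : ℝ} (hl : 0 ≤ l) (hlK : l * K ≤ 1) (hx : |x| ≤ K) :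
    exp (l * x) ≤ 1 + l * x + freedmanPsi K l * x ^ 2 := by
  have hlx : |l * x| ≤ l * K := by
    rw [abs_mul, abs_of_nonneg hl]; exact mul_le_mul_of_nonneg_left hx hl
  have hcube : |l * x| ^ 3 ≤ l ^ 3 * K * x ^ 2 := by
    have : |l * x| ^ 3 = l ^ 2 * x ^ 2 * |l * x| := by
      rw [pow_succ, sq_abs]; ring
    rw [this]
    nlinarith [mul_nonneg (sq_nonneg l) (sq_nonneg x)]
  have := Real.exp_le_one_add_add_sq_add_abs_cube (hlx.trans hlK)
  unfold freedmanPsi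
  nlinarith

lemma freedmanPsi_mul_sq_le_one {K l x : ℝ} (hl : 0 ≤ l) (hlK : l * K ≤ 1) (hx : |x| ≤ K) :
    freedmanPsi K l * x ^ 2 ≤ 1 := by
  have hK : 0 ≤ K := (abs_nonneg x).trans hx
  have hx2 : x ^ 2 ≤ K ^ 2 := sq_le_sq' (abs_le.1 hx).1 (abs_le.1 hx).2
  have hlK0 : 0 ≤ l * K := mul_nonneg hl hK
  calc freedmanPsi K l * x ^ 2 ≤ freedmanPsi K l * K ^ 2 :=
        mul_le_mul_of_nonneg_left hx2 (freedmanPsi_nonneg hK hl)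
    _ = (l * K) ^ 2 / 2 + 2 / 9 * (l * K) ^ 3 := by unfold freedmanPsi; ring
    _ ≤ 1 := by nlinarith [pow_le_one₀ hlK0 hlK (n := 2), pow_le_one₀ hlK0 hlK (n := 3)]

/-- `√(2c/b)` is the optimal rate at variance level `b`. Below `8 c K²` the rate `1/K` is used
instead: it keeps `l * K ≤ 1` and still handles the lowest dyadic level. -/
noncomputable def freedmanRate (c K b : ℝ) : ℝ :=
  if b ≤ 8 * c * K ^ 2 then K⁻¹ else √(2 * c / b)

lemma freedmanRate_nonneg {c K : ℝ} (hK : 0 ≤ K) (b : ℝ) : 0 ≤ freedmanRate c K b := by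
  unfold freedmanRate; split_ifs <;> positivity

lemma freedmanRate_mul_le_one {c K : ℝ} (hc : 0 < c) (hK : 0 < K) (b : ℝ) :
    freedmanRate c K b * K ≤ 1 := by
  unfold freedmanRate
  split_ifs with hb
  · rw [inv_mul_cancel₀ hK.ne']
  · have hb0 : 0 < b := lt_of_le_of_lt (by positivity) (not_le.1 hb)
    rw [← sqrt_sq hK.le, ← sqrt_mul (by positivity), sqrt_le_one, div_mul_eq_mul_div,
      div_le_one hb0]
    nlinarith

lemma measurable_freedmanRate (c K : ℝ) : Measurable (freedmanRate c K) :=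
  Measurable.ite measurableSet_Iic measurable_const
    ((measurable_const.div measurable_id).sqrt)

lemma le_inv_mul_sub_freedmanPsi_of_le {c K S : ℝ} (hc : 0 < c) (hK : 0 < K) (hS : 0 ≤ S)
    (hSc : S ≤ 8 * c * K ^ 2) :
    c ≤ K⁻¹ * (2 * √S * √c + 3 * K * c) - freedmanPsi K K⁻¹ * S := by
  have hs := sq_sqrt (mul_nonneg hS hc.le)
  rw [sqrt_mul hS] at hs
  have hsle : √S * √c ≤ 3 * K * c := by
    rw [← sqrt_mul hS, ← sqrt_sq (by positivity : 0 ≤ 3 * K * c)]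
    exact sqrt_le_sqrt (by nlinarith)
  -- with `s = √S √c`: `13 s² - 36 K c s - 36 K² c² = (s - 3 K c) (13 s + 3 K c) - 27 K² c²`
  have key : 13 * S ≤ 36 * K * (√S * √c) + 36 * K ^ 2 * c := by
    refine le_of_mul_le_mul_right ?_ hc
    nlinarith [mul_nonneg (sub_nonneg.2 hsle)
      (by positivity : 0 ≤ 13 * (√S * √c) + 3 * K * c)]
  have hpsi : freedmanPsi K K⁻¹ = 13 / 18 / K ^ 2 := by unfold freedmanPsi; field_simp; ring
  rw [hpsi, ← sub_nonneg]
  have : K⁻¹ * (2 * √S * √c + 3 * K * c) - 13 / 18 / K ^ 2 * S - c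
      = (36 * K * (√S * √c) + 36 * K ^ 2 * c - 13 * S) / (18 * K ^ 2) := by
    field_simp; ring
  rw [this]; apply div_nonneg <;> nlinarith

lemma le_sqrt_mul_sub_freedmanPsi {c K S b : ℝ} (hc : 0 < c) (hK : 0 ≤ K) (hb : 0 < b)
    (hbS : b ≤ 2 * S) :
    c ≤ √(2 * c / b) * (2 * √S * √c + 3 * K * c) - freedmanPsi K √(2 * c / b) * b := by
  set l := √(2 * c / b)
  have hl0 : 0 ≤ l := sqrt_nonneg _
  have hl2 : l ^ 2 * b = 2 * c := by rw [sq_sqrt (by positivity)]; field_simp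
  have hmain : 2 * c ≤ l * (2 * √S * √c) := by
    have : c ^ 2 ≤ (2 * c / b) * (S * c) := by
      rw [div_mul_eq_mul_div, le_div_iff₀ hb]; nlinarith
    have := sqrt_le_sqrt this
    rw [sqrt_sq hc.le, sqrt_mul (by positivity), sqrt_mul (by nlinarith)] at this
    linarith
  have hpsi : freedmanPsi K l * b = c + 4 / 9 * (l * K) * c := by
    unfold freedmanPsi
    linear_combination (1 / 2 + 2 / 9 * l * K) * hl2
  rw [hpsi]
  nlinarith [mul_nonneg hl0 hK]

lemma le_freedmanRate_mul_sub {c K S V b M : ℝ} (hc : 0 < c) (hK : 0 < K) (hV : 0 ≤ V)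
    (hVS : V ≤ S) (hSb : S ≤ b) (hb : b ≤ 2 * S ∨ b ≤ 8 * c * K ^ 2)
    (hM : 2 * √S * √c + 3 * K * c ≤ M) :
    c ≤ freedmanRate c K b * M - freedmanPsi K (freedmanRate c K b) * V := by
  have hS : 0 ≤ S := hV.trans hVS
  have hmono : ∀ l B, 0 ≤ l → V ≤ B →
      c ≤ l * (2 * √S * √c + 3 * K * c) - freedmanPsi K l * B →
      c ≤ l * M - freedmanPsi K l * V := fun l B hl hVB h => by
    nlinarith [mul_le_mul_of_nonneg_left hM hl,
      mul_le_mul_of_nonneg_left hVB (freedmanPsi_nonneg hK.le hl)]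
  unfold freedmanRate
  split_ifs with hb8
  · exact hmono _ S (by positivity) hVS (le_inv_mul_sub_freedmanPsi_of_le hc hK hS (hSb.trans hb8))
  · have hb0 : 0 < b := lt_of_le_of_lt (by positivity) (not_le.1 hb8)
    exact hmono _ b (sqrt_nonneg _) (hVS.trans hSb)
      (le_sqrt_mul_sub_freedmanPsi hc hK.le hb0 (hb.resolve_right hb8))

lemma exists_dyadic_level {S a : ℝ} (hSa : S ≤ a) (m : ℕ) :
    ∃ j ≤ m, S ≤ a / 2 ^ j ∧ (a / 2 ^ j ≤ 2 * S ∨ j = m) := by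
  induction m with
  | zero => exact ⟨0, le_rfl, by simpa using hSa, Or.inr rfl⟩
  | succ m ih =>
    obtain ⟨j, hjm, hSj, hj | rfl⟩ := ih
    · exact ⟨j, hjm.trans m.le_succ, hSj, Or.inl hj⟩
    · by_cases hS : S ≤ a / 2 ^ (j + 1)
      · exact ⟨j + 1, le_rfl, hS, Or.inr rfl⟩
      · refine ⟨j, j.le_succ, hSj, Or.inl ?_⟩
        rw [pow_succ, ← div_div] at hS
        linarith

lemma Real.natLog_add_one_le_logb_two_mul {T : ℕ} (hT : T ≠ 0) :
    (Nat.log 2 T : ℝ) + 1 ≤ logb 2 (2 * T) := by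
  rw [logb_mul two_ne_zero (by exact_mod_cast hT), logb_self_eq_one one_lt_two, add_comm]
  exact add_le_add_right (by exact_mod_cast natLog_le_logb T 2) 1

namespace MeasureTheory

variable {Ω : Type*} {m m0 : MeasurableSpace Ω} {μ : Measure Ω}

lemma ofReal_one_sub_le_measure_compl [IsProbabilityMeasure μ] {s : Set Ω} {δ : ℝ}
    (hδ : 0 ≤ δ) (hs : μ s ≤ ENNReal.ofReal δ) : ENNReal.ofReal (1 - δ) ≤ μ sᶜ := by
  rw [ENNReal.ofReal_sub _ hδ, ENNReal.ofReal_one, tsub_le_iff_right]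
  calc 1 = μ Set.univ := measure_univ.symm
    _ ≤ μ s + μ sᶜ := measure_univ_le_add_compl s
    _ ≤ μ sᶜ + ENNReal.ofReal δ := by rw [add_comm]; gcongr

lemma integrable_exp_mul_of_abs_le [IsFiniteMeasure μ] {Y l : Ω → ℝ} {K : ℝ}
    (hY : StronglyMeasurable Y) (hYK : ∀ᵐ ω ∂μ, |Y ω| ≤ K) (hl : StronglyMeasurable l) (hl0 : 0 ≤ l)
    (hlK : ∀ ω, l ω * K ≤ 1) : Integrable (fun ω => exp (l ω * Y ω)) μ := by
  refine .of_bound (continuous_exp.comp_stronglyMeasurable (hl.mul hY)).aestronglyMeasurable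
    (exp 1) ?_
  filter_upwards [hYK] with ω h
  rw [norm_eq_abs, abs_exp, exp_le_exp]
  exact (mul_le_mul_of_nonneg_left ((le_abs_self _).trans h) (hl0 ω)).trans (hlK ω)

lemma condExp_one_add_mul_add_mul_sq [IsFiniteMeasure μ] (hm : m ≤ m0) {Y a b : Ω → ℝ}
    (hY : Integrable Y μ) (hY2 : Integrable (Y ^ 2) μ) (ha : StronglyMeasurable[m] a)
    (hb : StronglyMeasurable[m] b) (haY : Integrable (a * Y) μ) (hbY : Integrable (b * Y ^ 2) μ)
    (hY0 : μ[Y|m] =ᵐ[μ] 0) :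
    μ[1 + a * Y + b * Y ^ 2|m] =ᵐ[μ] 1 + b * μ[Y ^ 2|m] := by
  have hone : Integrable (1 : Ω → ℝ) μ := integrable_const 1
  filter_upwards [condExp_add (hone.add haY) hbY m, condExp_add hone haY m,
    condExp_mul_of_stronglyMeasurable_left ha haY hY,
    condExp_mul_of_stronglyMeasurable_left hb hbY hY2, hY0] with ω h1 h2 h3 h4 h5
  have h1' : μ[(1 : Ω → ℝ)|m] = 1 := condExp_const hm (1 : ℝ)
  simp only [Pi.add_apply, Pi.mul_apply, Pi.one_apply, Pi.zero_apply] at h1 h2 h3 h4 h5 ⊢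
  rw [h1, h2, h3, h4, h5, h1']
  simp

lemma condExp_exp_mul_le [IsFiniteMeasure μ] (hm : m ≤ m0) {Y l : Ω → ℝ} {K : ℝ}
    (hY : StronglyMeasurable Y) (hYK : ∀ᵐ ω ∂μ, |Y ω| ≤ K) (hY0 : μ[Y|m] =ᵐ[μ] 0)
    (hl : StronglyMeasurable[m] l) (hl0 : 0 ≤ l) (hlK : ∀ ω, l ω * K ≤ 1) :
    μ[fun ω => exp (l ω * Y ω)|m] ≤ᵐ[μ]
      fun ω => exp (freedmanPsi K (l ω) * μ[Y ^ 2|m] ω) := by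
  set ψl : Ω → ℝ := fun ω => freedmanPsi K (l ω)
  have hψl : StronglyMeasurable[m] ψl := by
    unfold ψl freedmanPsi; fun_prop
  have hlY : ∀ᵐ ω ∂μ, |l ω * Y ω| ≤ 1 := by
    filter_upwards [hYK] with ω h
    rw [abs_mul, abs_of_nonneg (hl0 ω)]
    exact (mul_le_mul_of_nonneg_left h (hl0 ω)).trans (hlK ω)
  have hψY : ∀ᵐ ω ∂μ, |ψl ω * Y ω ^ 2| ≤ 1 := by
    filter_upwards [hYK] with ω h
    rw [abs_of_nonneg (mul_nonneg (freedmanPsi_nonneg ((abs_nonneg _).trans h) (hl0 ω))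
      (sq_nonneg _))]
    exact freedmanPsi_mul_sq_le_one (hl0 ω) (hlK ω) h
  have hint_lY : Integrable (l * Y) μ :=
    .of_bound ((hl.mono hm).mul hY).aestronglyMeasurable 1 hlY
  have hint_Y : Integrable Y μ := .of_bound hY.aestronglyMeasurable K (by simpa using hYK)
  have hint_Y2 : Integrable (Y ^ 2) μ := .of_bound (hY.pow 2).aestronglyMeasurable (K ^ 2) (by
    filter_upwards [hYK] with ω h
    simpa [abs_pow] using pow_le_pow_left₀ (abs_nonneg _) h 2)
  have hint_ψY2 : Integrable (ψl * Y ^ 2) μ :=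
    .of_bound ((hψl.mono hm).mul (hY.pow 2)).aestronglyMeasurable 1 hψY
  have hint_poly : Integrable (1 + l * Y + ψl * Y ^ 2) μ :=
    ((integrable_const 1 : Integrable (1 : Ω → ℝ) μ).add hint_lY).add hint_ψY2
  have hle_poly : (fun ω => exp (l ω * Y ω)) ≤ᵐ[μ] 1 + l * Y + ψl * Y ^ 2 := by
    filter_upwards [hYK] with ω h using exp_mul_le_freedmanPsi (hl0 ω) (hlK ω) h
  filter_upwards [condExp_mono (integrable_exp_mul_of_abs_le hY hYK (hl.mono hm) hl0 hlK)
    hint_poly hle_poly,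
    condExp_one_add_mul_add_mul_sq hm hint_Y hint_Y2 hl hψl hint_lY hint_ψY2 hY0] with ω h1 h2
  rw [h2] at h1
  exact h1.trans (by simpa [add_comm] using add_one_le_exp (ψl ω * μ[Y ^ 2|m] ω))

lemma Supermartingale.mul_measureReal_exists_ge_le [IsFiniteMeasure μ] {ℱ : Filtration ℕ m0}
    {f : ℕ → Ω → ℝ} (hf : Supermartingale f ℱ μ) (hf0 : ∀ n ω, 0 ≤ f n ω) {ε : ℝ} (hε : 0 ≤ ε)
    (n : ℕ) :
    ε * μ.real {ω | ∃ k ≤ n, ε ≤ f k ω} ≤ ∫ ω, f 0 ω ∂μ := by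
  set τ : Ω → ℕ∞ := fun ω => (hittingBtwn f (Set.Ici ε) 0 n ω : ℕ)
  have hτ : IsStoppingTime ℱ τ :=
    hf.stronglyAdapted.adapted.isStoppingTime_hittingBtwn measurableSet_Ici
  have hτn : ∀ ω, τ ω ≤ n := fun ω => WithTop.coe_le_coe.2 (hittingBtwn_le ω)
  have hsub : {ω | ∃ k ≤ n, ε ≤ f k ω} ⊆ {ω | ε ≤ stoppedValue f τ ω} :=
    fun ω ⟨k, hkn, hk⟩ => stoppedValue_hittingBtwn_mem ⟨k, ⟨k.zero_le, hkn⟩, hk⟩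
  have hstopped : ∫ ω, stoppedValue f τ ω ∂μ ≤ ∫ ω, f 0 ω ∂μ := by
    have := hf.neg.expected_stoppedValue_mono (isStoppingTime_const ℱ 0) hτ
      (fun ω => bot_le) hτn
    simp only [stoppedValue, Pi.neg_apply, integral_neg, neg_le_neg_iff] at this
    exact this
  calc ε * μ.real {ω | ∃ k ≤ n, ε ≤ f k ω}
      ≤ ε * μ.real {ω | ε ≤ stoppedValue f τ ω} :=
        mul_le_mul_of_nonneg_left (measureReal_mono hsub) hε
    _ ≤ ∫ ω, stoppedValue f τ ω ∂μ := mul_meas_ge_le_integral_of_nonneg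
        (.of_forall fun ω => hf0 _ ω) (integrable_stoppedValue ℕ hτ hf.integrable hτn) ε
    _ ≤ ∫ ω, f 0 ω ∂μ := hstopped

structure IsBddMartingaleDiff (μ : Measure Ω) (ℱ : Filtration ℕ m0) (X : ℕ → Ω → ℝ)
    (K : ℝ) : Prop where
  stronglyMeasurable : ∀ s, 1 ≤ s → StronglyMeasurable[ℱ s] (X s)
  condExp_eq_zero : ∀ s, 1 ≤ s → μ[X s|ℱ (s - 1)] =ᵐ[μ] 0
  abs_le : ∀ s, 1 ≤ s → ∀ᵐ ω ∂μ, |X s ω| ≤ K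

/-- The `𝔖_t²` of the statement. -/
noncomputable def condVarSum (μ : Measure Ω) (ℱ : Filtration ℕ m0) (X : ℕ → Ω → ℝ) (t : ℕ)
    (ω : Ω) : ℝ :=
  ∑ τ ∈ Finset.Icc 1 t, μ[X τ ^ 2|ℱ (τ - 1)] ω

noncomputable def freedmanExp (μ : Measure Ω) (ℱ : Filtration ℕ m0) (X : ℕ → Ω → ℝ) (K : ℝ)
    (l : Ω → ℝ) (t : ℕ) (ω : Ω) : ℝ :=
  exp (l ω * ∑ τ ∈ Finset.Icc 1 t, X τ ω - freedmanPsi K (l ω) * condVarSum μ ℱ X t ω)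

def freedmanTail (μ : Measure Ω) (ℱ : Filtration ℕ m0) (X : ℕ → Ω → ℝ) (K c : ℝ) (T : ℕ) :
    Set Ω :=
  {ω | ∃ t, 1 ≤ t ∧ t ≤ T ∧
    2 * √(condVarSum μ ℱ X T ω) * √c + 3 * K * c < ∑ τ ∈ Finset.Icc 1 t, X τ ω}

variable {ℱ : Filtration ℕ m0} {X : ℕ → Ω → ℝ} {K : ℝ}

lemma condVarSum_zero : condVarSum μ ℱ X 0 = 0 := by
  ext ω; simp [condVarSum]

lemma condVarSum_succ (t : ℕ) (ω : Ω) :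
    condVarSum μ ℱ X (t + 1) ω = condVarSum μ ℱ X t ω + μ[X (t + 1) ^ 2|ℱ t] ω := by
  rw [condVarSum, Finset.sum_Icc_succ_top (Nat.le_add_left 1 t)]; rfl

lemma stronglyMeasurable_condVarSum {t n : ℕ} (htn : t ≤ n + 1) :
    StronglyMeasurable[ℱ n] (condVarSum μ ℱ X t) :=
  Finset.stronglyMeasurable_fun_sum _ fun τ hτ =>
    stronglyMeasurable_condExp.mono (ℱ.mono (by grind))

lemma ae_monotone_condVarSum (μ : Measure Ω) (ℱ : Filtration ℕ m0) (X : ℕ → Ω → ℝ) :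
    ∀ᵐ ω ∂μ, Monotone fun t => condVarSum μ ℱ X t ω := by
  have hnonneg : ∀ τ, 0 ≤ᵐ[μ] μ[X τ ^ 2|ℱ (τ - 1)] := fun τ =>
    condExp_nonneg (.of_forall fun ω => sq_nonneg (X τ ω))
  filter_upwards [ae_all_iff.2 hnonneg] with ω h
  refine monotone_nat_of_le_succ fun t => ?_
  rw [condVarSum_succ]
  exact le_add_of_nonneg_right (h (t + 1))

lemma condVarSum_nonneg_of_monotone {ω : Ω} (h : Monotone fun t => condVarSum μ ℱ X t ω)
    (t : ℕ) : 0 ≤ condVarSum μ ℱ X t ω := by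
  simpa [condVarSum_zero] using h t.zero_le

namespace IsBddMartingaleDiff

lemma stronglyMeasurable_sum (hX : IsBddMartingaleDiff μ ℱ X K) (t : ℕ) :
    StronglyMeasurable[ℱ t] fun ω => ∑ τ ∈ Finset.Icc 1 t, X τ ω :=
  Finset.stronglyMeasurable_fun_sum _ fun τ hτ =>
    (hX.stronglyMeasurable τ (Finset.mem_Icc.1 hτ).1).mono (ℱ.mono (Finset.mem_Icc.1 hτ).2)

lemma ae_abs_le (hX : IsBddMartingaleDiff μ ℱ X K) :
    ∀ᵐ ω ∂μ, ∀ s, 1 ≤ s → |X s ω| ≤ K := by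
  refine ae_all_iff.2 fun s => ?_
  rcases Nat.eq_zero_or_pos s with rfl | hs
  · exact .of_forall fun _ h => absurd h (by norm_num)
  · filter_upwards [hX.abs_le s hs] with ω h using fun _ => h

lemma ae_condVarSum_le [IsFiniteMeasure μ] (hX : IsBddMartingaleDiff μ ℱ X K) :
    ∀ᵐ ω ∂μ, ∀ t, condVarSum μ ℱ X t ω ≤ K ^ 2 * t := by
  have hσ : ∀ s, 1 ≤ s → μ[X s ^ 2|ℱ (s - 1)] ≤ᵐ[μ] fun _ => K ^ 2 := fun s hs => by
    have hsq : X s ^ 2 ≤ᵐ[μ] fun _ => K ^ 2 := by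
      filter_upwards [hX.abs_le s hs] with ω h
      simpa [sq_abs] using pow_le_pow_left₀ (abs_nonneg _) h 2
    simpa [condExp_const (ℱ.le (s - 1))] using
      condExp_mono (m := ℱ (s - 1)) (Integrable.of_bound
        (((hX.stronglyMeasurable s hs).mono (ℱ.le s)).pow 2).aestronglyMeasurable (K ^ 2)
        (by filter_upwards [hsq] with ω h; simpa using h)) (integrable_const (K ^ 2)) hsq
  filter_upwards [ae_all_iff.2 fun s => ae_all_iff.2 fun hs : 1 ≤ s => hσ s hs] with ω h t
  calc condVarSum μ ℱ X t ω ≤ ∑ _τ ∈ Finset.Icc 1 t, K ^ 2 :=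
        Finset.sum_le_sum fun τ hτ => h τ (Finset.mem_Icc.1 hτ).1
    _ = K ^ 2 * t := by simp [mul_comm]

lemma stronglyAdapted_freedmanExp {l : Ω → ℝ} (hX : IsBddMartingaleDiff μ ℱ X K)
    (hl : StronglyMeasurable[ℱ 0] l) : StronglyAdapted ℱ (freedmanExp μ ℱ X K l) := fun t => by
  have hlt : StronglyMeasurable[ℱ t] l := hl.mono (ℱ.mono t.zero_le)
  have hψl : StronglyMeasurable[ℱ t] fun ω => freedmanPsi K (l ω) := by
    unfold freedmanPsi; fun_prop
  exact continuous_exp.comp_stronglyMeasurable ((hlt.mul (hX.stronglyMeasurable_sum t)).sub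
    (hψl.mul (stronglyMeasurable_condVarSum t.le_succ)))

lemma integrable_freedmanExp [IsFiniteMeasure μ] {l : Ω → ℝ} (hX : IsBddMartingaleDiff μ ℱ X K)
    (hl : StronglyMeasurable[ℱ 0] l) (hl0 : 0 ≤ l) (hlK : ∀ ω, l ω * K ≤ 1) (t : ℕ) :
    Integrable (freedmanExp μ ℱ X K l t) μ := by
  refine .of_bound (((hX.stronglyAdapted_freedmanExp hl) t).mono (ℱ.le t)).aestronglyMeasurable
    (exp t) ?_
  filter_upwards [hX.ae_abs_le, ae_monotone_condVarSum μ ℱ X] with ω hXK hmono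
  have hsum : l ω * ∑ τ ∈ Finset.Icc 1 t, X τ ω ≤ t := by
    have hterm : ∀ τ ∈ Finset.Icc 1 t, l ω * X τ ω ≤ 1 := fun τ hτ =>
      (mul_le_mul_of_nonneg_left (le_abs_self _) (hl0 ω)).trans
        ((mul_le_mul_of_nonneg_left (hXK τ (Finset.mem_Icc.1 hτ).1) (hl0 ω)).trans (hlK ω))
    simpa [Finset.mul_sum] using Finset.sum_le_card_nsmul _ _ 1 hterm
  rw [freedmanExp, norm_eq_abs, abs_exp, exp_le_exp]
  nlinarith [mul_nonneg (freedmanPsi_nonneg ((abs_nonneg _).trans (hXK 1 le_rfl)) (hl0 ω))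
    (condVarSum_nonneg_of_monotone hmono t)]

lemma condExp_freedmanExp_succ_le [IsFiniteMeasure μ] {l : Ω → ℝ}
    (hX : IsBddMartingaleDiff μ ℱ X K) (hl : StronglyMeasurable[ℱ 0] l) (hl0 : 0 ≤ l)
    (hlK : ∀ ω, l ω * K ≤ 1) (t : ℕ) :
    μ[freedmanExp μ ℱ X K l (t + 1)|ℱ t] ≤ᵐ[μ] freedmanExp μ ℱ X K l t := by
  have ht1 : 1 ≤ t + 1 := Nat.le_add_left 1 t
  have hlt : StronglyMeasurable[ℱ t] l := hl.mono (ℱ.mono t.zero_le)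
  set A : Ω → ℝ := fun ω =>
    freedmanExp μ ℱ X K l t ω * exp (-(freedmanPsi K (l ω) * μ[X (t + 1) ^ 2|ℱ t] ω))
  set E : Ω → ℝ := fun ω => exp (l ω * X (t + 1) ω)
  have hsplit : freedmanExp μ ℱ X K l (t + 1) = A * E := by
    ext ω
    simp only [freedmanExp, A, E, Pi.mul_apply, ← exp_add, Finset.sum_Icc_succ_top ht1,
      condVarSum_succ]
    ring_nf
  have hA : StronglyMeasurable[ℱ t] A := by
    have := hX.stronglyAdapted_freedmanExp hl t
    have : StronglyMeasurable[ℱ t] μ[X (t + 1) ^ 2|ℱ t] := stronglyMeasurable_condExp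
    unfold A freedmanPsi
    fun_prop
  have hXt : StronglyMeasurable (X (t + 1)) := (hX.stronglyMeasurable _ ht1).mono (ℱ.le _)
  have hE : Integrable E μ :=
    integrable_exp_mul_of_abs_le hXt (hX.abs_le _ ht1) (hl.mono (ℱ.le 0)) hl0 hlK
  rw [hsplit]
  filter_upwards [condExp_mul_of_stronglyMeasurable_left hA
      (hsplit ▸ hX.integrable_freedmanExp hl hl0 hlK (t + 1)) hE,
    condExp_exp_mul_le (ℱ.le t) hXt (hX.abs_le _ ht1) (hX.condExp_eq_zero _ ht1) hlt hl0 hlK]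
    with ω h1 h2
  rw [h1, Pi.mul_apply]
  calc A ω * μ[E|ℱ t] ω ≤ A ω * exp (freedmanPsi K (l ω) * μ[X (t + 1) ^ 2|ℱ t] ω) :=
        mul_le_mul_of_nonneg_left h2 (mul_pos (exp_pos _) (exp_pos _)).le
    _ = freedmanExp μ ℱ X K l t ω := by
      simp only [A, mul_assoc, ← exp_add, neg_add_cancel, exp_zero, mul_one]

lemma supermartingale_freedmanExp [IsFiniteMeasure μ] {l : Ω → ℝ}
    (hX : IsBddMartingaleDiff μ ℱ X K) (hl : StronglyMeasurable[ℱ 0] l) (hl0 : 0 ≤ l)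
    (hlK : ∀ ω, l ω * K ≤ 1) : Supermartingale (freedmanExp μ ℱ X K l) ℱ μ :=
  supermartingale_nat (hX.stronglyAdapted_freedmanExp hl) (hX.integrable_freedmanExp hl hl0 hlK)
    (hX.condExp_freedmanExp_succ_le hl hl0 hlK)

lemma measure_exists_le_mul_sub_le [IsProbabilityMeasure μ] {l : Ω → ℝ}
    (hX : IsBddMartingaleDiff μ ℱ X K) (hl : StronglyMeasurable[ℱ 0] l) (hl0 : 0 ≤ l)
    (hlK : ∀ ω, l ω * K ≤ 1) (c : ℝ) (T : ℕ) :
    μ {ω | ∃ t ≤ T, c ≤ l ω * ∑ τ ∈ Finset.Icc 1 t, X τ ω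
        - freedmanPsi K (l ω) * condVarSum μ ℱ X t ω} ≤ ENNReal.ofReal (exp (-c)) := by
  have hZ0 : ∫ ω, freedmanExp μ ℱ X K l 0 ω ∂μ = 1 := by
    simp [freedmanExp, condVarSum_zero]
  have hmax := (hX.supermartingale_freedmanExp hl hl0 hlK).mul_measureReal_exists_ge_le
    (fun _ _ => (exp_pos _).le) (exp_pos c).le T
  rw [hZ0] at hmax
  simp only [freedmanExp, exp_le_exp] at hmax
  rw [← ofReal_measureReal, exp_neg, ← one_div]
  exact ENNReal.ofReal_le_ofReal ((le_div_iff₀' (exp_pos c)).2 hmax)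

lemma measure_freedmanTail_le_of_quarter_le [IsProbabilityMeasure μ]
    (hX : IsBddMartingaleDiff μ ℱ X K) (hK : 0 < K) {c : ℝ} (hc : 1 / 4 ≤ c) (T : ℕ) :
    μ (freedmanTail μ ℱ X K c T) ≤ ENNReal.ofReal ((Nat.log 2 T + 1) * exp (-c)) := by
  have hc0 : 0 < c := by linarith
  set m := Nat.log 2 T
  set l : ℕ → ℝ := fun j => freedmanRate c K (K ^ 2 * T / 2 ^ j)
  set D : ℕ → Set Ω := fun j => {ω | ∃ t ≤ T,
    c ≤ l j * ∑ τ ∈ Finset.Icc 1 t, X τ ω - freedmanPsi K (l j) * condVarSum μ ℱ X t ω}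
  have hbottom : K ^ 2 * T / 2 ^ m ≤ 8 * c * K ^ 2 := by
    have hT : (T : ℝ) ≤ 2 * 2 ^ m := by
      exact_mod_cast ((Nat.lt_pow_succ_log_self (by norm_num) T).trans_eq (pow_succ' 2 m)).le
    rw [div_le_iff₀ (by positivity)]
    nlinarith [mul_le_mul_of_nonneg_left hT (sq_nonneg K),
      mul_nonneg (mul_nonneg (by linarith : (0 : ℝ) ≤ 8 * c - 2) (sq_nonneg K))
        (pow_pos (two_pos (α := ℝ)) m).le]
  have hcover : freedmanTail μ ℱ X K c T ≤ᵐ[μ] ⋃ j ∈ Finset.range (m + 1), D j := by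
    filter_upwards [ae_monotone_condVarSum μ ℱ X, hX.ae_condVarSum_le] with ω hmono hle hω
    obtain ⟨t, -, htT, hM⟩ := hω
    obtain ⟨j, hjm, hSj, hj⟩ := exists_dyadic_level (hle T) m
    refine Set.mem_biUnion (Finset.mem_range.2 (Nat.lt_succ_of_le hjm)) ⟨t, htT, ?_⟩
    exact le_freedmanRate_mul_sub hc0 hK (condVarSum_nonneg_of_monotone hmono t) (hmono htT) hSj
      (hj.imp_right fun h : j = m => h ▸ hbottom) hM.le
  calc μ (freedmanTail μ ℱ X K c T) ≤ μ (⋃ j ∈ Finset.range (m + 1), D j) :=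
        measure_mono_ae hcover
    _ ≤ ∑ j ∈ Finset.range (m + 1), μ (D j) := measure_biUnion_finset_le _ _
    _ ≤ ∑ _j ∈ Finset.range (m + 1), ENNReal.ofReal (exp (-c)) := Finset.sum_le_sum fun j _ =>
        hX.measure_exists_le_mul_sub_le (l := fun _ => l j) stronglyMeasurable_const
          (fun _ => freedmanRate_nonneg hK.le _) (fun _ => freedmanRate_mul_le_one hc0 hK _) c T
    _ = ENNReal.ofReal ((m + 1) * exp (-c)) := by
      rw [← ENNReal.ofReal_sum_of_nonneg fun _ _ => (exp_pos _).le]; simp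

lemma measure_freedmanTail_one_le [IsProbabilityMeasure μ] (hX : IsBddMartingaleDiff μ ℱ X K)
    (hK : 0 < K) {c : ℝ} (hc : 0 < c) :
    μ (freedmanTail μ ℱ X K c 1) ≤ ENNReal.ofReal (exp (-c)) := by
  set l : Ω → ℝ := fun ω => freedmanRate c K (condVarSum μ ℱ X 1 ω)
  have hl : StronglyMeasurable[ℱ 0] l := ((measurable_freedmanRate c K).comp
    (stronglyMeasurable_condVarSum le_rfl).measurable).stronglyMeasurable
  refine (measure_mono_ae ?_).trans (hX.measure_exists_le_mul_sub_le hl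
    (fun _ => freedmanRate_nonneg hK.le _) (fun _ => freedmanRate_mul_le_one hc hK _) c 1)
  filter_upwards [ae_monotone_condVarSum μ ℱ X] with ω hmono hω
  obtain ⟨t, -, ht1, hM⟩ := hω
  have hS := condVarSum_nonneg_of_monotone hmono 1
  exact ⟨t, ht1, le_freedmanRate_mul_sub hc hK (condVarSum_nonneg_of_monotone hmono t)
    (hmono ht1) le_rfl (Or.inl (le_mul_of_one_le_left hS one_le_two)) hM.le⟩

end IsBddMartingaleDiff

end MeasureTheory

theorem bernstein_freedman_general
    {Ω : Type*} {m0 : MeasurableSpace Ω} {μ : Measure Ω}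
    [IsProbabilityMeasure μ]
    (ℱ : Filtration ℕ m0)
    (X : ℕ → Ω → ℝ) {K : ℝ} (hK : 0 < K)
    (hadapted : ∀ s, 1 ≤ s → StronglyMeasurable[ℱ s] (X s))
    (hmd : ∀ s, 1 ≤ s → μ[X s|ℱ (s - 1)] =ᵐ[μ] 0)
    (hbd : ∀ s, 1 ≤ s → ∀ᵐ ω ∂μ, |X s ω| ≤ K)
    (Ssq : ℕ → Ω → ℝ)
    (hSsq : ∀ t ω, Ssq t ω = ∑ τ ∈ Finset.Icc 1 t, (μ[(X τ) ^ 2|ℱ (τ - 1)]) ω)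
    {δ : ℝ} (hδ0 : 0 < δ) (hδ1 : δ < 1) (T : ℕ) (hT : 1 ≤ T) :
    ENNReal.ofReal (1 - δ) ≤
      μ {ω | ∀ t, 1 ≤ t → t ≤ T →
          ∑ τ ∈ Finset.Icc 1 t, X τ ω
            ≤ 2 * Real.sqrt (Ssq T ω)
                * Real.sqrt (Real.log (Real.logb 2 (2 * T) / δ))
              + 3 * K * Real.log (Real.logb 2 (2 * T) / δ)} := by
  have hX : IsBddMartingaleDiff μ ℱ X K := ⟨hadapted, hmd, hbd⟩
  set L := logb 2 (2 * T)
  set c := log (L / δ)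
  have hL : (Nat.log 2 T : ℝ) + 1 ≤ L := natLog_add_one_le_logb_two_mul (by omega)
  have hL1 : 1 ≤ L := le_of_add_le_of_nonneg_right hL (Nat.cast_nonneg _)
  have hLδ : L ≤ L / δ := le_div_self (by linarith) hδ0 hδ1.le
  have hc : 0 < c := log_pos ((one_lt_div hδ0).2 (by linarith))
  have hexp : exp (-c) = δ / L := by rw [exp_neg, exp_log (by positivity), inv_div]
  have htail : μ (freedmanTail μ ℱ X K c T) ≤ ENNReal.ofReal ((Nat.log 2 T + 1) * (δ / L)) := by
    rw [← hexp]
    rcases hT.eq_or_lt with rfl | hT2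
    · simpa using hX.measure_freedmanTail_one_le hK hc
    · have hlog : (1 : ℝ) ≤ Nat.log 2 T := by exact_mod_cast Nat.log_pos one_lt_two hT2
      have hc4 : 1 / 4 ≤ c := by
        linarith [log_le_log two_pos (by linarith : (2 : ℝ) ≤ L / δ), log_two_gt_d9]
      exact hX.measure_freedmanTail_le_of_quarter_le hK hc4 T
  have hδ : ((Nat.log 2 T : ℝ) + 1) * (δ / L) ≤ δ :=
    (mul_le_mul_of_nonneg_right hL (by positivity)).trans_eq (mul_div_cancel₀ δ (by positivity))
  refine (ofReal_one_sub_le_measure_compl hδ0.le (htail.trans (ENNReal.ofReal_le_ofReal hδ))).trans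
    (measure_mono fun ω hω t ht1 htT => ?_)
  rw [hSsq T ω]
  exact not_lt.1 fun h => hω ⟨t, ht1, htT, h⟩

/-- a version of the Bernstein–Freedman inequality. -/
theorem bernstein_freedman
    {Ω : Type*} {m0 : MeasurableSpace Ω} {μ : Measure Ω}
    [IsProbabilityMeasure μ]
    (ℱ : Filtration ℕ m0)
    (X : ℕ → Ω → ℝ) {K : ℝ} (hK : 0 < K)
    (hadapted : ∀ s, 1 ≤ s → StronglyMeasurable[ℱ s] (X s))
    (hint : ∀ s, 1 ≤ s → Integrable (X s) μ)
    (hmd : ∀ s, 1 ≤ s → μ[X s|ℱ (s - 1)] =ᵐ[μ] 0)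
    (hbd : ∀ s, 1 ≤ s → ∀ᵐ ω ∂μ, |X s ω| ≤ K)
    (Ssq : ℕ → Ω → ℝ)
    (hSsq : ∀ t ω, Ssq t ω = ∑ τ ∈ Finset.Icc 1 t, (μ[(X τ) ^ 2|ℱ (τ - 1)]) ω)
    {δ : ℝ} (hδ0 : 0 < δ) (hδ1 : δ < 1) (T : ℕ) (hT : 1 ≤ T) :
    ENNReal.ofReal (1 - δ) ≤
      μ {ω | ∀ t, 1 ≤ t → t ≤ T →
          ∑ τ ∈ Finset.Icc 1 t, X τ ω
            ≤ 2 * Real.sqrt (Ssq T ω)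
                * Real.sqrt (Real.log (Real.logb 2 (2 * T) / δ))
              + 3 * K * Real.log (Real.logb 2 (2 * T) / δ)} :=
  bernstein_freedman_general ℱ X hK hadapted hmd hbd Ssq hSsq hδ0 hδ1 T hT
end

section
/- Let (a_t)_{t≥1} be a non-negative real sequence and S_t = Σ_{τ=1}^t a_τ. Then for every integer T ≥ 1: (i) Σ_{t=1}^T a_t / √( (S_t + 1)·log(e·(1 + S_t)) ) ≤ 2·√(S_T), and (ii) Σ_{t=1}^T a_t / ( (S_t + 1)·log(e·(1 + S_t)) ) ≤ log( log( e·(1 + S_T) ) ). -/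
/-!
Both sums are lower Riemann-type sums of concave potentials: with `x = S_{t-1}` and `y = S_t`,
the summand `a_t / D(S_t)` is at most `Φ(S_t) - Φ(S_{t-1})`, where `Φ y = 2 √y` for (i) and
`Φ y = log (1 + log (1 + y)) = log (log (e (1 + y)))` for (ii), so the sums telescope to
`Φ(S_T) - Φ(0)`. The increment bounds follow from `√y - √x ≥ (y - x) / (2 √y)` and, twice, from
`log y - log x ≥ (y - x) / y`.
-/

open Real Finset

lemma sub_div_le_log_sub_log {x y : ℝ} (hx : 0 < x) (hy : 0 < y) :
    (y - x) / y ≤ log y - log x := by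
  have h := one_sub_inv_le_log_of_pos (div_pos hy hx)
  rw [log_div hy.ne' hx.ne', inv_div] at h
  calc (y - x) / y = 1 - x / y := by field_simp
    _ ≤ log y - log x := h

lemma log_exp_one_mul {z : ℝ} (hz : z ≠ 0) : log (exp 1 * z) = 1 + log z := by
  rw [log_mul (exp_ne_zero 1) hz, log_exp]

lemma sub_div_sqrt_le_two_mul_sqrt_sub {x y D : ℝ} (hx : 0 ≤ x) (hxy : x ≤ y) (hyD : y ≤ D) :
    (y - x) / √D ≤ 2 * √y - 2 * √x := by
  have hsqrt_xy : √x ≤ √y := sqrt_le_sqrt hxy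
  rcases (sqrt_nonneg D).eq_or_lt with hD | hD
  · rw [← hD, div_zero]
    linarith
  · rw [div_le_iff₀ hD]
    have hsqrt_yD : √y ≤ √D := sqrt_le_sqrt hyD
    -- `y - x = (√y - √x) (√y + √x) ≤ 2 (√y - √x) √D`
    nlinarith [sq_sqrt hx, sq_sqrt (hx.trans hxy), sqrt_nonneg x,
      mul_le_mul_of_nonneg_left hsqrt_yD (sub_nonneg.2 hsqrt_xy)]

lemma sub_div_le_log_one_add_log_sub {x y : ℝ} (hx : 0 ≤ x) (hxy : x ≤ y) :
    (y - x) / ((y + 1) * (1 + log (1 + y)))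
      ≤ log (1 + log (1 + y)) - log (1 + log (1 + x)) := by
  have hv : 0 ≤ log (1 + x) := log_nonneg (by linarith)
  have hvu : log (1 + x) ≤ log (1 + y) := log_le_log (by linarith) (by linarith)
  have hinner : (y - x) / (y + 1) ≤ log (1 + y) - log (1 + x) := by
    have := sub_div_le_log_sub_log (x := 1 + x) (y := 1 + y) (by linarith) (by linarith)
    rw [add_sub_add_left_eq_sub] at this
    rwa [add_comm 1 y] at this ⊢
  have houter := sub_div_le_log_sub_log (x := 1 + log (1 + x)) (y := 1 + log (1 + y))
    (by linarith) (by linarith)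
  rw [add_sub_add_left_eq_sub] at houter
  calc (y - x) / ((y + 1) * (1 + log (1 + y)))
      = (y - x) / (y + 1) / (1 + log (1 + y)) := by rw [div_div]
    _ ≤ (log (1 + y) - log (1 + x)) / (1 + log (1 + y)) := by
        gcongr
        linarith
    _ ≤ _ := houter

lemma sum_div_le_sub_of_increment_le (a S : ℕ → ℝ) (ha : ∀ t, 0 ≤ a t)
    (hS : ∀ t, S t = ∑ τ ∈ Icc 1 t, a τ) (D Φ : ℝ → ℝ)
    (hΦ : ∀ x y, 0 ≤ x → x ≤ y → (y - x) / D y ≤ Φ y - Φ x) (T : ℕ) :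
    ∑ t ∈ Icc 1 T, a t / D (S t) ≤ Φ (S T) - Φ 0 := by
  induction T with
  | zero => simp [hS]
  | succ T ih =>
    have hST : 0 ≤ S T := hS T ▸ sum_nonneg fun τ _ => ha τ
    have hsucc : S (T + 1) = S T + a (T + 1) := by
      rw [hS, hS, sum_Icc_succ_top (by omega)]
    have hstep := hΦ (S T) (S (T + 1)) hST (by linarith [ha (T + 1)])
    rw [hsucc, add_sub_cancel_left] at hstep
    rw [sum_Icc_succ_top (by omega), hsucc]
    linarith

theorem sum_bounds_H_general (a : ℕ → ℝ) (ha : ∀ t, 0 ≤ a t)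
    (S : ℕ → ℝ) (hS : ∀ t, S t = ∑ τ ∈ Finset.Icc 1 t, a τ)
    (T : ℕ) :
    (∑ t ∈ Finset.Icc 1 T,
        a t / Real.sqrt ((S t + 1) * Real.log (Real.exp 1 * (1 + S t)))
      ≤ 2 * Real.sqrt (S T)) ∧
    (∑ t ∈ Finset.Icc 1 T,
        a t / ((S t + 1) * Real.log (Real.exp 1 * (1 + S t)))
      ≤ Real.log (Real.log (Real.exp 1 * (1 + S T)))) := by
  have hST : 0 ≤ S T := hS T ▸ sum_nonneg fun τ _ => ha τ
  have hlog : ∀ y : ℝ, 0 ≤ y → log (exp 1 * (1 + y)) = 1 + log (1 + y) :=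
    fun y hy => log_exp_one_mul (by linarith)
  constructor
  · have := sum_div_le_sub_of_increment_le a S ha hS
      (fun y => √((y + 1) * log (exp 1 * (1 + y)))) (fun y => 2 * √y)
      (fun x y hx hxy => by
        refine sub_div_sqrt_le_two_mul_sqrt_sub hx hxy ?_
        rw [hlog y (hx.trans hxy)]
        nlinarith [log_nonneg (by linarith : (1 : ℝ) ≤ 1 + y)]) T
    simpa using this
  · have := sum_div_le_sub_of_increment_le a S ha hS
      (fun y => (y + 1) * log (exp 1 * (1 + y))) (fun y => log (1 + log (1 + y)))
      (fun x y hx hxy => hlog y (hx.trans hxy) ▸ sub_div_le_log_one_add_log_sub hx hxy) T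
    rw [hlog _ hST]
    simpa using this

/-- two summation bounds with the `H`-type normalization. -/
theorem sum_bounds_H (a : ℕ → ℝ) (ha : ∀ t, 0 ≤ a t)
    (S : ℕ → ℝ) (hS : ∀ t, S t = ∑ τ ∈ Finset.Icc 1 t, a τ)
    (T : ℕ) (hT : 1 ≤ T) :
    (∑ t ∈ Finset.Icc 1 T,
        a t / Real.sqrt ((S t + 1) * Real.log (Real.exp 1 * (1 + S t)))
      ≤ 2 * Real.sqrt (S T)) ∧
    (∑ t ∈ Finset.Icc 1 T,
        a t / ((S t + 1) * Real.log (Real.exp 1 * (1 + S t)))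
      ≤ Real.log (Real.log (Real.exp 1 * (1 + S T)))) :=
  sum_bounds_H_general a ha S hS T
end
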